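/- arXiv:2603.29130 — 11 statements merged into one kernel-verified Lean document; each statement's English description precedes it below -/
import Mathlib

section
/- Let n ≥ 3, let K ⊂ ℝ^n be a convex body with boundary of class C¹, let q ∈ ℝ^n \ K be a point light source, and let H be an affine hyperplane with q ∈ H and H ∩ int K ≠ ∅. Then the shadow boundary S_q of K created by q is not contained in H; that is, a flat shadow boundary is never contained in a hyperplane passing through its light source. -/
open scoped RealInnerProductSpace

/-- A convex body: a compact convex set with nonempty interior. -/
def IsConvexBody {n : ℕ} (K : Set (EuclideanSpace ℝ (Fin n))) : Prop :=
  IsCompact K ∧ Convex ℝ K ∧ (interior K).Nonempty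

/-- `ν` is the outward unit normal field of `K` along its boundary:
at every boundary point it is a unit vector and the corresponding tangent
hyperplane supports `K`. -/
def IsOutwardUnitNormal {n : ℕ} (K : Set (EuclideanSpace ℝ (Fin n)))
    (ν : EuclideanSpace ℝ (Fin n) → EuclideanSpace ℝ (Fin n)) : Prop :=
  ∀ x ∈ frontier K, ‖ν x‖ = 1 ∧ ∀ y ∈ K, ⟪ν x, y - x⟫ ≤ 0

/-- The boundary of `K` is a hypersurface of class `C^k` with normal field `ν`:
near every boundary point the boundary is the zero set of a `C^k` defining
function whose gradient is nonvanishing and points in the direction `ν`. -/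
def BoundaryCk {n : ℕ} (k : ℕ) (K : Set (EuclideanSpace ℝ (Fin n)))
    (ν : EuclideanSpace ℝ (Fin n) → EuclideanSpace ℝ (Fin n)) : Prop :=
  ∀ x ∈ frontier K, ∃ U ∈ nhds x, ∃ F : EuclideanSpace ℝ (Fin n) → ℝ,
    ContDiffOn ℝ (k : ℕ∞) F U ∧ (∀ y ∈ U, (y ∈ frontier K ↔ F y = 0)) ∧
    ∀ y ∈ U ∩ frontier K, gradient F y ≠ 0 ∧ gradient F y = ‖gradient F y‖ • ν y

/-- The shadow boundary of `K` created by a point light source `q`: the set of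
boundary points whose tangent hyperplane passes through `q`. -/
def shadowBoundary {n : ℕ} (K : Set (EuclideanSpace ℝ (Fin n)))
    (ν : EuclideanSpace ℝ (Fin n) → EuclideanSpace ℝ (Fin n))
    (q : EuclideanSpace ℝ (Fin n)) : Set (EuclideanSpace ℝ (Fin n)) :=
  {x | x ∈ frontier K ∧ ⟪ν x, q - x⟫ = 0}

/-- A set is flat if it is contained in some affine hyperplane. -/
def IsFlat {n : ℕ} (S : Set (EuclideanSpace ℝ (Fin n))) : Prop :=
  ∃ (v : EuclideanSpace ℝ (Fin n)) (c : ℝ), v ≠ 0 ∧ ∀ x ∈ S, ⟪v, x⟫ = c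

/-- An ellipsoid: the image of the closed Euclidean unit ball under an
invertible affine map. -/
def IsEllipsoid {n : ℕ} (K : Set (EuclideanSpace ℝ (Fin n))) : Prop :=
  ∃ A : EuclideanSpace ℝ (Fin n) ≃ᵃ[ℝ] EuclideanSpace ℝ (Fin n),
    K = A '' Metric.closedBall 0 1

open Set Metric Filter

set_option maxHeartbeats 1000000

/-- Crossing lemma: near a boundary point `x`, in any direction `w` not parallel
to the normal, there are frontier points `y` close to `x` with `⟪w, y - x⟫ > 0`. -/
lemma aux_crossing {n : ℕ} {K : Set (EuclideanSpace ℝ (Fin n))}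
    {ν : EuclideanSpace ℝ (Fin n) → EuclideanSpace ℝ (Fin n)}
    (hν : IsOutwardUnitNormal K ν) (hbd : BoundaryCk 1 K ν)
    {x : EuclideanSpace ℝ (Fin n)} (hx : x ∈ frontier K)
    {w : EuclideanSpace ℝ (Fin n)} (hw : w - ⟪w, ν x⟫ • ν x ≠ 0)
    {δ : ℝ} (hδ : 0 < δ) :
    ∃ y ∈ frontier K, ‖y - x‖ < δ ∧ 0 < ⟪w, y - x⟫ := by
  obtain ⟨hν1, -⟩ := hν x hx
  set ν₁ := ν x with hν₁def
  set t := w - ⟪w, ν₁⟫ • ν₁ with htdef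
  have hνν : ⟪ν₁, ν₁⟫ = 1 := by
    rw [real_inner_self_eq_norm_mul_norm, hν1]; norm_num
  have hνt : ⟪ν₁, t⟫ = 0 := by
    rw [htdef, inner_sub_right, real_inner_smul_right, hνν, real_inner_comm]
    ring
  have hwt : ⟪w, t⟫ = ‖t‖ ^ 2 := by
    have h1 : ⟪t, t⟫ = ‖t‖ ^ 2 := real_inner_self_eq_norm_sq t
    have h2 : ⟪t, t⟫ = ⟪w, t⟫ - ⟪w, ν₁⟫ * ⟪ν₁, t⟫ := by
      rw [htdef, inner_sub_left, real_inner_smul_left]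
    rw [hνt] at h2; linarith
  have ht0 : 0 < ‖t‖ := norm_pos_iff.mpr hw
  have ht2 : 0 < ‖t‖ ^ 2 := by positivity
  obtain ⟨U, hU, F, hF, hiff, hgrad⟩ := hbd x hx
  have hxU : x ∈ U := mem_of_mem_nhds hU
  have hFx : F x = 0 := (hiff x hxU).mp hx
  obtain ⟨hG0, hGν⟩ := hgrad x ⟨hxU, hx⟩
  set G := gradient F x with hGdef
  set lam := ‖G‖ with hlamdef
  have hlam0 : 0 < lam := norm_pos_iff.mpr hG0
  have hGt : ⟪G, t⟫ = 0 := by rw [hGν, real_inner_smul_left, hνt, mul_zero]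
  have hGν1 : ⟪G, ν₁⟫ = lam := by
    rw [hGν, real_inner_smul_left, hνν, mul_one]
  have hdiff : HasGradientAt F G x :=
    ((hF.contDiffAt hU).differentiableAt (by norm_num)).hasGradientAt
  have hlo := hasGradientAt_iff_isLittleO_nhds_zero.mp hdiff
  set A := |⟪w, ν₁⟫| with hAdef
  have hA0 : 0 ≤ A := abs_nonneg _
  set ε := ‖t‖ ^ 2 / (2 * (A + 1)) with hεdef
  have hε : 0 < ε := by positivity
  set B := ‖t‖ + ε with hBdef
  have hB : 0 < B := by positivity
  set η := lam * ε / (2 * B) with hηdef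
  have hη : 0 < η := by positivity
  have hev := hlo.def hη
  rw [Metric.eventually_nhds_iff] at hev
  obtain ⟨ρ, hρ0, hρ⟩ := hev
  obtain ⟨ρ₂, hρ₂0, hρ₂⟩ := Metric.mem_nhds_iff.mp hU
  set m := min ρ (min ρ₂ δ) with hmdef
  have hm0 : 0 < m := by
    simp only [hmdef, lt_min_iff]; exact ⟨hρ0, hρ₂0, hδ⟩
  set s := m / (2 * B) with hsdef
  have hs : 0 < s := by positivity
  have hsB : s * B < m := by
    rw [hsdef]; rw [div_mul_eq_mul_div]
    rw [div_lt_iff₀ (by positivity)]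
    nlinarith
  have hkey : ∀ r : ℝ, |r| ≤ ε * s → ‖s • t + r • ν₁‖ ≤ s * B := by
    intro r hr
    calc ‖s • t + r • ν₁‖ ≤ ‖s • t‖ + ‖r • ν₁‖ := norm_add_le _ _
      _ = s * ‖t‖ + |r| := by
          rw [norm_smul, norm_smul, hν1, Real.norm_eq_abs, Real.norm_eq_abs,
            abs_of_pos hs, mul_one]
      _ ≤ s * ‖t‖ + ε * s := by linarith
      _ = s * B := by rw [hBdef]; ring
  have hmemU : ∀ r : ℝ, |r| ≤ ε * s → x + (s • t + r • ν₁) ∈ U := by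
    intro r hr
    apply hρ₂
    rw [mem_ball, dist_eq_norm, add_sub_cancel_left]
    calc ‖s • t + r • ν₁‖ ≤ s * B := hkey r hr
      _ < m := hsB
      _ ≤ ρ₂ := le_trans (min_le_right _ _) (min_le_left _ _)
  have hGinner : ∀ r : ℝ, ⟪G, s • t + r • ν₁⟫ = lam * r := by
    intro r
    rw [inner_add_right, real_inner_smul_right, real_inner_smul_right, hGt, hGν1]
    ring
  have happrox : ∀ r : ℝ, |r| ≤ ε * s →
      |F (x + (s • t + r • ν₁)) - lam * r| ≤ lam * (ε * s) / 2 := by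
    intro r hr
    have hball : dist (s • t + r • ν₁) (0 : EuclideanSpace ℝ (Fin n)) < ρ := by
      rw [dist_zero_right]
      calc ‖s • t + r • ν₁‖ ≤ s * B := hkey r hr
        _ < m := hsB
        _ ≤ ρ := min_le_left _ _
    have := hρ hball
    rw [hFx, sub_zero, hGinner r] at this
    have hnorm : ‖s • t + r • ν₁‖ ≤ s * B := hkey r hr
    have hηB : η * (s * B) = lam * (ε * s) / 2 := by
      rw [hηdef]; field_simp
    calc |F (x + (s • t + r • ν₁)) - lam * r|
        = ‖F (x + (s • t + r • ν₁)) - lam * r‖ := (Real.norm_eq_abs _).symm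
      _ ≤ η * ‖s • t + r • ν₁‖ := this
      _ ≤ η * (s * B) := mul_le_mul_of_nonneg_left hnorm hη.le
      _ = lam * (ε * s) / 2 := hηB
  set φ : ℝ → ℝ := fun r => F (x + (s • t + r • ν₁)) with hφdef
  have hεs : 0 < ε * s := by positivity
  have hpos : 0 < φ (ε * s) := by
    have := happrox (ε * s) (by rw [abs_of_pos hεs])
    have h1 : |φ (ε * s) - lam * (ε * s)| ≤ lam * (ε * s) / 2 := this
    rw [abs_le] at h1
    nlinarith
  have hneg : φ (-(ε * s)) < 0 := by
    have := happrox (-(ε * s)) (by rw [abs_neg, abs_of_pos hεs])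
    have h1 : |φ (-(ε * s)) - lam * (-(ε * s))| ≤ lam * (ε * s) / 2 := this
    rw [abs_le] at h1
    nlinarith
  have hcontφ : ContinuousOn φ (Icc (-(ε * s)) (ε * s)) := by
    apply (hF.continuousOn).comp
    · exact (continuous_const.add (continuous_const.add
        (continuous_id.smul continuous_const))).continuousOn
    · intro r hr
      apply hmemU
      rw [abs_le]; exact ⟨hr.1, hr.2⟩
  have h0mem : (0 : ℝ) ∈ Icc (φ (-(ε * s))) (φ (ε * s)) := ⟨le_of_lt hneg, le_of_lt hpos⟩
  obtain ⟨r, hrIcc, hr0⟩ := intermediate_value_Icc (by linarith) hcontφ h0mem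
  have hrabs : |r| ≤ ε * s := abs_le.mpr ⟨hrIcc.1, hrIcc.2⟩
  refine ⟨x + (s • t + r • ν₁), ?_, ?_, ?_⟩
  · exact (hiff _ (hmemU r hrabs)).mpr hr0
  · rw [add_sub_cancel_left]
    calc ‖s • t + r • ν₁‖ ≤ s * B := hkey r hrabs
      _ < m := hsB
      _ ≤ δ := le_trans (min_le_right _ _) (min_le_right _ _)
  · rw [add_sub_cancel_left, inner_add_right, real_inner_smul_right,
      real_inner_smul_right, hwt]
    have h1 : r * ⟪w, ν₁⟫ ≥ -(ε * s * A) := by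
      have := abs_mul r ⟪w, ν₁⟫
      have h2 : |r * ⟪w, ν₁⟫| ≤ ε * s * A := by
        rw [abs_mul]
        apply mul_le_mul hrabs (le_refl A) (abs_nonneg _) (by positivity)
      linarith [neg_abs_le (r * ⟪w, ν₁⟫)]
    have hεA : ε * A ≤ ‖t‖ ^ 2 / 2 := by
      rw [hεdef]
      rw [div_mul_eq_mul_div, div_le_div_iff₀ (by positivity) (by norm_num)]
      nlinarith
    nlinarith

/-- Uniqueness of supporting direction at a smooth boundary point. -/
lemma aux_support_parallel {n : ℕ} {K : Set (EuclideanSpace ℝ (Fin n))}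
    {ν : EuclideanSpace ℝ (Fin n) → EuclideanSpace ℝ (Fin n)}
    (hν : IsOutwardUnitNormal K ν) (hbd : BoundaryCk 1 K ν) (hcl : IsClosed K)
    {x : EuclideanSpace ℝ (Fin n)} (hx : x ∈ frontier K)
    {a : EuclideanSpace ℝ (Fin n)} (ha : ∀ y ∈ K, ⟪a, y - x⟫ ≤ 0) :
    a = ⟪a, ν x⟫ • ν x := by
  by_contra h
  obtain ⟨y, hyfr, -, hy⟩ := aux_crossing hν hbd hx (sub_ne_zero.mpr h) one_pos
  exact absurd (ha y (hcl.frontier_subset hyfr)) (not_le.mpr hy)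

/-- Continuity of the shadow function within the frontier. -/
lemma aux_gcont {n : ℕ} {K : Set (EuclideanSpace ℝ (Fin n))}
    {ν : EuclideanSpace ℝ (Fin n) → EuclideanSpace ℝ (Fin n)}
    (hbd : BoundaryCk 1 K ν) (q : EuclideanSpace ℝ (Fin n))
    {x : EuclideanSpace ℝ (Fin n)} (hx : x ∈ frontier K) :
    ContinuousWithinAt (fun y => ⟪ν y, q - y⟫) (frontier K) x := by
  obtain ⟨U, hU, F, hF, hiff, hgrad⟩ := hbd x hx
  have hxU : x ∈ interior U := mem_interior_iff_mem_nhds.mpr hU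
  have hfd : ContinuousOn (fderiv ℝ F) (interior U) :=
    (hF.mono interior_subset).continuousOn_fderiv_of_isOpen isOpen_interior (by norm_num)
  have hgradcont : ContinuousOn (fun y => gradient F y) (interior U) := by
    have : (fun y => gradient F y) =
        fun y => (InnerProductSpace.toDual ℝ (EuclideanSpace ℝ (Fin n))).symm (fderiv ℝ F y) :=
      rfl
    rw [this]
    exact (InnerProductSpace.toDual ℝ
      (EuclideanSpace ℝ (Fin n))).symm.continuous.comp_continuousOn hfd
  have hca : ContinuousAt (fun y => gradient F y) x :=
    hgradcont.continuousAt (isOpen_interior.mem_nhds hxU)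
  have hGx0 : gradient F x ≠ 0 := (hgrad x ⟨mem_of_mem_nhds hU, hx⟩).1
  set h : EuclideanSpace ℝ (Fin n) → ℝ :=
    fun y => (‖gradient F y‖)⁻¹ * ⟪gradient F y, q - y⟫ with hhdef
  have hhca : ContinuousAt h x := by
    apply ContinuousAt.mul
    · exact (hca.norm.inv₀ (norm_ne_zero_iff.mpr hGx0))
    · exact hca.inner ((continuous_const.sub continuous_id).continuousAt)
  have heq : ∀ y ∈ frontier K ∩ interior U, ⟪ν y, q - y⟫ = h y := by
    intro y hy
    obtain ⟨hG0, hGν⟩ := hgrad y ⟨interior_subset hy.2, hy.1⟩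
    have hn0 : (0:ℝ) < ‖gradient F y‖ := norm_pos_iff.mpr hG0
    have hinner : ⟪gradient F y, q - y⟫ = ‖gradient F y‖ * ⟪ν y, q - y⟫ := by
      conv_lhs => rw [hGν]
      rw [real_inner_smul_left]
    rw [hhdef]
    simp only
    rw [hinner, inv_mul_cancel_left₀ hn0.ne']
  apply hhca.continuousWithinAt.congr_of_eventuallyEq
  · filter_upwards [mem_nhdsWithin_of_mem_nhds (isOpen_interior.mem_nhds hxU),
      self_mem_nhdsWithin] with y h1 h2
    exact heq y ⟨h2, h1⟩
  · exact heq x ⟨hx, hxU⟩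

/-- At boundary points on the plane through an interior point, `v` is not parallel
to the normal. -/
lemma aux_notpar {n : ℕ} {K : Set (EuclideanSpace ℝ (Fin n))}
    {ν : EuclideanSpace ℝ (Fin n) → EuclideanSpace ℝ (Fin n)}
    (hν : IsOutwardUnitNormal K ν)
    {z x v : EuclideanSpace ℝ (Fin n)} (hz : z ∈ interior K) (hx : x ∈ frontier K)
    (hv : v ≠ 0) (hvx : ⟪v, x⟫ = ⟪v, z⟫) : v - ⟪v, ν x⟫ • ν x ≠ 0 := by
  intro h
  have hvμ : v = ⟪v, ν x⟫ • ν x := sub_eq_zero.mp h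
  set μ := ⟪v, ν x⟫ with hμdef
  have hμ0 : μ ≠ 0 := by
    intro h0; rw [h0, zero_smul] at hvμ; exact hv hvμ
  obtain ⟨ρ, hρ0, hball⟩ := Metric.isOpen_iff.mp isOpen_interior z hz
  have hvn : (0:ℝ) < ‖v‖ := norm_pos_iff.mpr hv
  set τ := ρ / (2 * ‖v‖) with hτdef
  have hτ0 : 0 < τ := by positivity
  have hτρ : τ * ‖v‖ = ρ / 2 := by rw [hτdef]; field_simp
  have hmem : ∀ σ : ℝ, |σ| = τ → z + σ • v ∈ K := by
    intro σ hσ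
    refine interior_subset (hball ?_)
    rw [mem_ball, dist_eq_norm, add_sub_cancel_left, norm_smul, Real.norm_eq_abs, hσ, hτρ]
    linarith
  have hsup := (hν x hx).2
  have h1 := hsup _ (hmem τ (abs_of_pos hτ0))
  have h2 := hsup _ (hmem (-τ) (by rw [abs_neg, abs_of_pos hτ0]))
  have e1 : ⟪v, z + τ • v - x⟫ = τ * ‖v‖ ^ 2 := by
    rw [inner_sub_right, inner_add_right, real_inner_smul_right,
      real_inner_self_eq_norm_sq, hvx]
    ring
  have e2 : ⟪v, z + (-τ) • v - x⟫ = -(τ * ‖v‖ ^ 2) := by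
    rw [inner_sub_right, inner_add_right, real_inner_smul_right,
      real_inner_self_eq_norm_sq, hvx]
    ring
  have f1 : ⟪v, z + τ • v - x⟫ = μ * ⟪ν x, z + τ • v - x⟫ := by
    nth_rewrite 1 [hvμ]
    rw [real_inner_smul_left]
  have f2 : ⟪v, z + (-τ) • v - x⟫ = μ * ⟪ν x, z + (-τ) • v - x⟫ := by
    nth_rewrite 1 [hvμ]
    rw [real_inner_smul_left]
  have hτv : 0 < τ * ‖v‖ ^ 2 := by positivity
  rcases le_or_gt μ 0 with hμ | hμ
  · nlinarith
  · nlinarith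

/-- A cap of the boundary cut off by a hyperplane through an interior point is
preconnected. -/
lemma aux_cap_preconnected {n : ℕ} {K : Set (EuclideanSpace ℝ (Fin n))}
    (hK : IsConvexBody K) {z : EuclideanSpace ℝ (Fin n)} (hz : z ∈ interior K)
    (w : EuclideanSpace ℝ (Fin n)) :
    IsPreconnected (frontier K ∩ {x | 0 < ⟪w, x - z⟫}) := by
  obtain ⟨hcomp, hconv, -⟩ := hK
  set hom := Homeomorph.subRight (G := EuclideanSpace ℝ (Fin n)) z with hhomdef
  set K₀ := (fun x => x - z) '' K with hK₀def
  have himg : ∀ s : Set (EuclideanSpace ℝ (Fin n)), hom '' s = (fun x => x - z) '' s := by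
    intro s; rfl
  have hK₀conv : Convex ℝ K₀ := by
    have h1 : K₀ = (fun x => -z + x) '' K := by
      rw [hK₀def]; ext p; constructor
      · rintro ⟨x, hx, rfl⟩; exact ⟨x, hx, by simp [sub_eq_neg_add]⟩
      · rintro ⟨x, hx, rfl⟩; exact ⟨x, hx, by simp [sub_eq_neg_add]⟩
    rw [h1]
    exact hconv.translate (-z)
  have h0int : (0 : EuclideanSpace ℝ (Fin n)) ∈ interior K₀ := by
    have h2 : (fun x => x - z) '' interior K = interior K₀ := by
      rw [hK₀def, ← himg, ← himg, hom.image_interior]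
    rw [← h2]
    exact ⟨z, hz, by simp⟩
  have hnhds : K₀ ∈ nhds (0 : EuclideanSpace ℝ (Fin n)) := mem_interior_iff_mem_nhds.mp h0int
  have habs : Absorbent ℝ K₀ := absorbent_nhds_zero hnhds
  have hbdd : Bornology.IsVonNBounded ℝ K₀ := by
    exact NormedSpace.isVonNBounded_of_isBounded _
      (hcomp.image (continuous_id.sub continuous_const)).isBounded
  have hfr : ∀ p : EuclideanSpace ℝ (Fin n), z + p ∈ frontier K ↔ gauge K₀ p = 1 := by
    intro p
    rw [gauge_eq_one_iff_mem_frontier hK₀conv hnhds]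
    have hfr' : frontier K₀ = (fun x => x - z) '' frontier K := by
      rw [hK₀def, ← himg, ← himg, hom.image_frontier]
    rw [hfr']
    constructor
    · intro h; exact ⟨z + p, h, by simp⟩
    · rintro ⟨x, hx, hxe⟩
      have hxz : x = z + p := by
        have h3 : x - z = p := hxe
        rw [← h3]; simp
      rwa [← hxz]
  have hgpos : ∀ p : EuclideanSpace ℝ (Fin n), p ≠ 0 → 0 < gauge K₀ p := by
    intro p hp
    exact (gauge_pos habs hbdd).mpr hp
  have hgc : Continuous (gauge K₀) := continuous_gauge hK₀conv hnhds
  set M := {u : EuclideanSpace ℝ (Fin n) | 0 < ⟪w, u⟫} with hMdef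
  have hlin : IsLinearMap ℝ (fun u : EuclideanSpace ℝ (Fin n) => ⟪w, u⟫) :=
    ⟨fun a b => inner_add_right w a b, fun c a => real_inner_smul_right w a c⟩
  have hMconv : Convex ℝ M := convex_halfSpace_gt hlin 0
  set f : EuclideanSpace ℝ (Fin n) → EuclideanSpace ℝ (Fin n) :=
    fun u => z + (gauge K₀ u)⁻¹ • u with hfdef
  have hM0 : ∀ u ∈ M, u ≠ (0 : EuclideanSpace ℝ (Fin n)) := by
    intro u hu h0
    rw [hMdef] at hu
    simp only [Set.mem_setOf_eq, h0, inner_zero_right] at hu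
    exact lt_irrefl 0 hu
  have hfc : ContinuousOn f M := by
    apply continuousOn_const.add
    apply ContinuousOn.fun_smul _ continuousOn_id
    exact (hgc.continuousOn).inv₀ fun u hu => (hgpos u (hM0 u hu)).ne'
  have himage : f '' M = frontier K ∩ {x | 0 < ⟪w, x - z⟫} := by
    ext x
    constructor
    · rintro ⟨u, hu, rfl⟩
      have hu0 : u ≠ 0 := hM0 u hu
      have hg : 0 < gauge K₀ u := hgpos u hu0
      constructor
      · have hone : gauge K₀ ((gauge K₀ u)⁻¹ • u) = 1 := by
          rw [gauge_smul_of_nonneg (inv_nonneg.mpr hg.le), smul_eq_mul,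
            inv_mul_cancel₀ hg.ne']
        exact (hfr _).mpr hone
      · simp only [hfdef, Set.mem_setOf_eq, add_sub_cancel_left, real_inner_smul_right]
        exact mul_pos (inv_pos.mpr hg) hu
    · rintro ⟨hxf, hxw⟩
      refine ⟨x - z, hxw, ?_⟩
      have hone : gauge K₀ (x - z) = 1 := by
        rw [← hfr (x - z)]
        convert hxf using 2
        abel
      rw [hfdef]
      simp only [hone, inv_one, one_smul]
      simp
  rw [← himage]
  exact (hMconv.isPreconnected).image f hfc

/-- for a convex body `K ⊂ ℝⁿ` (`n ≥ 3`) with `C¹` boundary, a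
point light source `q ∉ K`, and an affine hyperplane `H = {x | ⟪v, x⟫ = c}`
passing through `q` and meeting the interior of `K`, the shadow boundary of
`K` created by `q` is not contained in `H`. -/
theorem shadow_boundary_not_contained_in_hyperplane_through_source
    (n : ℕ) (hn : 3 ≤ n)
    (K : Set (EuclideanSpace ℝ (Fin n))) (hK : IsConvexBody K)
    (ν : EuclideanSpace ℝ (Fin n) → EuclideanSpace ℝ (Fin n))
    (hν : IsOutwardUnitNormal K ν) (hbd : BoundaryCk 1 K ν)
    (q : EuclideanSpace ℝ (Fin n)) (hq : q ∉ K)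
    (v : EuclideanSpace ℝ (Fin n)) (c : ℝ) (hv : v ≠ 0)
    (hqH : ⟪v, q⟫ = c)
    (hHK : ∃ x ∈ interior K, ⟪v, x⟫ = c) :
    ¬ shadowBoundary K ν q ⊆ {x | ⟪v, x⟫ = c} := by
  intro hsub
  obtain ⟨hcomp, hconv, hint⟩ := hK
  have hclosed : IsClosed K := hcomp.isClosed
  obtain ⟨z, hz, hzc⟩ := hHK
  have hzK : z ∈ K := interior_subset hz
  obtain ⟨ρ, hρ0, hball⟩ := Metric.isOpen_iff.mp isOpen_interior z hz
  set g : EuclideanSpace ℝ (Fin n) → ℝ := fun y => ⟪ν y, q - y⟫ with hgdef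
  have hzeroH : ∀ y ∈ frontier K, g y = 0 → ⟪v, y⟫ = c := fun y hy h0 => hsub ⟨hy, h0⟩
  have hinzc : ∀ y : EuclideanSpace ℝ (Fin n), ⟪v, y - z⟫ = ⟪v, y⟫ - c := by
    intro y; rw [inner_sub_right, hzc]
  have hinzc' : ∀ y : EuclideanSpace ℝ (Fin n), ⟪-v, y - z⟫ = c - ⟪v, y⟫ := by
    intro y; rw [inner_neg_left, hinzc]; ring
  -- the generic finishing move: a cap containing an illuminated and a dark point
  have main : ∀ w : EuclideanSpace ℝ (Fin n),
      (∀ y : EuclideanSpace ℝ (Fin n), 0 < ⟪w, y - z⟫ → ⟪v, y⟫ ≠ c) →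
      ∀ P N : EuclideanSpace ℝ (Fin n), P ∈ frontier K → N ∈ frontier K →
      0 < ⟪w, P - z⟫ → 0 < ⟪w, N - z⟫ → 0 < g P → g N < 0 → False := by
    intro w hoff P N hPf hNf hPc hNc hgP hgN
    have hpre := aux_cap_preconnected ⟨hcomp, hconv, hint⟩ hz w
    have hcont : ContinuousOn g (frontier K ∩ {x | 0 < ⟪w, x - z⟫}) := by
      intro y hy
      exact (aux_gcont hbd q hy.1).mono Set.inter_subset_left
    obtain ⟨y, hy, hy0⟩ := hpre.intermediate_value₂ ⟨hNf, hNc⟩ ⟨hPf, hPc⟩ hcont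
      continuousOn_const hgN.le hgP.le
    exact hoff y hy.2 (hzeroH y hy.1 hy0)
  -- sign persistence near a frontier point
  have hdarknear : ∀ x ∈ frontier K, g x < 0 →
      ∃ δ > 0, ∀ y ∈ frontier K, ‖y - x‖ < δ → g y < 0 := by
    intro x hx hgx
    have hev : g ⁻¹' Set.Iio 0 ∈ nhdsWithin x (frontier K) :=
      aux_gcont hbd q hx (Iio_mem_nhds hgx)
    rw [Metric.mem_nhdsWithin_iff] at hev
    obtain ⟨δ, hδ0, hδ⟩ := hev
    refine ⟨δ, hδ0, fun y hy hyx => ?_⟩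
    exact hδ ⟨by rwa [Metric.mem_ball, dist_eq_norm], hy⟩
  have hlightnear : ∀ x ∈ frontier K, 0 < g x →
      ∃ δ > 0, ∀ y ∈ frontier K, ‖y - x‖ < δ → 0 < g y := by
    intro x hx hgx
    have hev : g ⁻¹' Set.Ioi 0 ∈ nhdsWithin x (frontier K) :=
      aux_gcont hbd q hx (Ioi_mem_nhds hgx)
    rw [Metric.mem_nhdsWithin_iff] at hev
    obtain ⟨δ, hδ0, hδ⟩ := hev
    refine ⟨δ, hδ0, fun y hy hyx => ?_⟩
    exact hδ ⟨by rwa [Metric.mem_ball, dist_eq_norm], hy⟩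
  ---- construction of a dark point on H
  set u := z - q with hudef
  have hu0 : u ≠ 0 := by
    rw [hudef, sub_ne_zero]
    intro h; exact hq (by rw [← h]; exact hzK)
  have hun : 0 < ‖u‖ := norm_pos_iff.mpr hu0
  set S1 := {s : ℝ | 0 ≤ s ∧ z + s • u ∈ K} with hS1def
  have hS1closed : IsClosed S1 := by
    have : S1 = Set.Ici 0 ∩ (fun s : ℝ => z + s • u) ⁻¹' K := by
      ext s; simp [hS1def, Set.mem_Ici]
    rw [this]
    refine isClosed_Ici.inter (hclosed.preimage ?_)
    exact continuous_const.add (continuous_id.smul continuous_const)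
  have hS1ne : S1.Nonempty := ⟨0, le_refl 0, by simpa using hzK⟩
  obtain ⟨R, hR⟩ := hcomp.isBounded.subset_closedBall z
  have hS1bdd : BddAbove S1 := by
    refine ⟨R / ‖u‖, fun s hs => ?_⟩
    have h1 := hR hs.2
    rw [Metric.mem_closedBall, dist_eq_norm, add_sub_cancel_left, norm_smul,
      Real.norm_eq_abs, abs_of_nonneg hs.1] at h1
    rw [le_div_iff₀ hun]
    exact h1
  set sm := sSup S1 with hsmdef
  have hsmmem : sm ∈ S1 := hS1closed.csSup_mem hS1ne hS1bdd
  have hτu : ρ / (2 * ‖u‖) * ‖u‖ = ρ / 2 := by field_simp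
  have hsmpos : 0 < sm := by
    have hmem : ρ / (2 * ‖u‖) ∈ S1 := by
      refine ⟨by positivity, interior_subset (hball ?_)⟩
      rw [Metric.mem_ball, dist_eq_norm, add_sub_cancel_left, norm_smul,
        Real.norm_eq_abs, abs_of_pos (by positivity), hτu]
      linarith
    calc (0:ℝ) < ρ / (2 * ‖u‖) := by positivity
      _ ≤ sm := le_csSup hS1bdd hmem
  set xb := z + sm • u with hxbdef
  have hxbK : xb ∈ K := hsmmem.2
  have hxbnotint : xb ∉ interior K := by
    intro hmem
    obtain ⟨ρ', hρ'0, hball'⟩ := Metric.isOpen_iff.mp isOpen_interior xb hmem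
    have hτu' : ρ' / (2 * ‖u‖) * ‖u‖ = ρ' / 2 := by field_simp
    have hmem' : sm + ρ' / (2 * ‖u‖) ∈ S1 := by
      refine ⟨add_nonneg hsmmem.1 (by positivity), interior_subset (hball' ?_)⟩
      rw [Metric.mem_ball, dist_eq_norm]
      have he : z + (sm + ρ' / (2 * ‖u‖)) • u - xb = (ρ' / (2 * ‖u‖)) • u := by
        rw [hxbdef, add_smul]; abel
      rw [he, norm_smul, Real.norm_eq_abs, abs_of_pos (by positivity), hτu']
      linarith
    have hle := le_csSup hS1bdd hmem'
    have hpos : 0 < ρ' / (2 * ‖u‖) := by positivity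
    linarith
  have hxbfr : xb ∈ frontier K := by
    rw [hclosed.frontier_eq]; exact ⟨hxbK, hxbnotint⟩
  have hvu : ⟪v, u⟫ = 0 := by rw [hudef, inner_sub_right, hzc, hqH, sub_self]
  have hvxb : ⟪v, xb⟫ = c := by
    rw [hxbdef, inner_add_right, real_inner_smul_right, hvu, mul_zero, add_zero, hzc]
  have hgxb : g xb < 0 := by
    obtain ⟨hνb1, hsupb⟩ := hν xb hxbfr
    have hyb : z + (ρ/2) • ν xb ∈ K := by
      refine interior_subset (hball ?_)
      rw [Metric.mem_ball, dist_eq_norm, add_sub_cancel_left, norm_smul,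
        Real.norm_eq_abs, hνb1, mul_one, abs_of_pos (by positivity)]
      linarith
    have h1 := hsupb _ hyb
    have h2 : ⟪ν xb, z + (ρ/2) • ν xb - xb⟫ = ⟪ν xb, z - xb⟫ + ρ/2 := by
      rw [add_sub_right_comm, inner_add_right, real_inner_smul_right,
        real_inner_self_eq_norm_mul_norm, hνb1]
      ring
    rw [h2] at h1
    have hzxb : z - xb = -(sm • u) := by rw [hxbdef]; abel
    have h4 : ⟪ν xb, z - xb⟫ = -(sm * ⟪ν xb, u⟫) := by
      rw [hzxb, inner_neg_right, real_inner_smul_right]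
    rw [h4] at h1
    have hI : 0 < ⟪ν xb, u⟫ := by nlinarith
    have h5 : q - xb = -((1 + sm) • u) := by
      rw [hxbdef, hudef, add_smul, one_smul]; abel
    have h6 : g xb = -((1 + sm) * ⟪ν xb, u⟫) := by
      rw [hgdef]
      simp only
      rw [h5, inner_neg_right, real_inner_smul_right]
    rw [h6]; nlinarith
  ---- the illuminated point: metric projection of q
  obtain ⟨x₀, hx₀K, hproj⟩ :=
    exists_norm_eq_iInf_of_complete_convex ⟨z, hzK⟩ (hclosed.isComplete) hconv q
  have hsupp : ∀ y ∈ K, ⟪q - x₀, y - x₀⟫ ≤ 0 :=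
    (norm_eq_iInf_iff_real_inner_le_zero hconv hx₀K).mp hproj
  set a := q - x₀ with hadef
  have ha0 : a ≠ 0 := by
    rw [hadef, sub_ne_zero]
    intro h; exact hq (by rw [h]; exact hx₀K)
  have han : 0 < ‖a‖ := norm_pos_iff.mpr ha0
  have hx₀notint : x₀ ∉ interior K := by
    intro hmem
    obtain ⟨ρ', hρ'0, hball'⟩ := Metric.isOpen_iff.mp isOpen_interior x₀ hmem
    have hτa : ρ' / (2 * ‖a‖) * ‖a‖ = ρ' / 2 := by field_simp
    have hyK : x₀ + (ρ' / (2 * ‖a‖)) • a ∈ K := by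
      refine interior_subset (hball' ?_)
      rw [Metric.mem_ball, dist_eq_norm, add_sub_cancel_left, norm_smul,
        Real.norm_eq_abs, abs_of_pos (by positivity), hτa]
      linarith
    have h1 := hsupp _ hyK
    rw [add_sub_cancel_left, real_inner_smul_right] at h1
    have h2 : ⟪a, a⟫ = ‖a‖ ^ 2 := real_inner_self_eq_norm_sq a
    rw [h2] at h1
    nlinarith
  have hx₀fr : x₀ ∈ frontier K := by rw [hclosed.frontier_eq]; exact ⟨hx₀K, hx₀notint⟩
  have hpar : a = ⟪a, ν x₀⟫ • ν x₀ := aux_support_parallel hν hbd hclosed hx₀fr hsupp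
  have hlam0ne : ⟪a, ν x₀⟫ ≠ 0 := by
    intro h0; rw [h0, zero_smul] at hpar; exact ha0 hpar
  have hlam0pos : 0 < ⟪a, ν x₀⟫ := by
    rcases hlam0ne.lt_or_gt with hneg | hpos
    · exfalso
      obtain ⟨hν1, hsup0⟩ := hν x₀ hx₀fr
      have hyK : z + (ρ/2) • ν x₀ ∈ K := by
        refine interior_subset (hball ?_)
        rw [Metric.mem_ball, dist_eq_norm, add_sub_cancel_left, norm_smul,
          Real.norm_eq_abs, hν1, mul_one, abs_of_pos (by positivity)]
        linarith
      have hA := hsup0 _ hyK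
      have hB' := hsupp z hzK
      have eA : ⟪ν x₀, z + (ρ/2) • ν x₀ - x₀⟫ = ⟪ν x₀, z - x₀⟫ + ρ/2 := by
        rw [add_sub_right_comm, inner_add_right, real_inner_smul_right,
          real_inner_self_eq_norm_mul_norm, hν1]
        ring
      rw [eA] at hA
      have fB : ⟪a, z - x₀⟫ = ⟪a, ν x₀⟫ * ⟪ν x₀, z - x₀⟫ := by
        nth_rewrite 1 [hpar]; rw [real_inner_smul_left]
      rw [fB] at hB'
      nlinarith [mul_nonneg (neg_nonneg.mpr hneg.le)
        (by linarith : (0:ℝ) ≤ -⟪ν x₀, z - x₀⟫ - ρ/2)]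
    · exact hpos
  have hgx₀ : 0 < g x₀ := by
    have : g x₀ = ⟪a, ν x₀⟫ := by
      rw [hgdef]
      simp only
      rw [← hadef, real_inner_comm]
    rw [this]; exact hlam0pos
  ---- dark points on both sides of H near xb
  have hvxbz : ⟪v, xb⟫ = ⟪v, z⟫ := by rw [hvxb, hzc]
  have hwb : v - ⟪v, ν xb⟫ • ν xb ≠ 0 := aux_notpar hν hz hxbfr hv hvxbz
  obtain ⟨δb, hδb0, hδb⟩ := hdarknear xb hxbfr hgxb
  obtain ⟨yp, hypfr, hypd, hypw⟩ := aux_crossing hν hbd hxbfr hwb hδb0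
  have hgyp : g yp < 0 := hδb yp hypfr hypd
  have hypc : 0 < ⟪v, yp - z⟫ := by
    have h1 : ⟪v, yp - xb⟫ = ⟪v, yp⟫ - c := by rw [inner_sub_right, hvxb]
    rw [hinzc]; rw [h1] at hypw; linarith
  have hwb' : (-v) - ⟪-v, ν xb⟫ • ν xb ≠ 0 := by
    have he : (-v) - ⟪-v, ν xb⟫ • ν xb = -(v - ⟪v, ν xb⟫ • ν xb) := by
      rw [inner_neg_left, neg_smul]; abel
    rw [he]; exact neg_ne_zero.mpr hwb
  obtain ⟨yn, hynfr, hynd, hynw⟩ := aux_crossing hν hbd hxbfr hwb' hδb0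
  have hgyn : g yn < 0 := hδb yn hynfr hynd
  have hync : 0 < ⟪-v, yn - z⟫ := by
    have h1 : ⟪-v, yn - xb⟫ = c - ⟪v, yn⟫ := by
      rw [inner_neg_left, inner_sub_right, hvxb]; ring
    rw [hinzc']; rw [h1] at hynw; linarith
  ---- half-space conditions
  have hoffpos : ∀ y : EuclideanSpace ℝ (Fin n), 0 < ⟪v, y - z⟫ → ⟪v, y⟫ ≠ c := by
    intro y hy; rw [hinzc] at hy; intro h; rw [h] at hy; linarith
  have hoffneg : ∀ y : EuclideanSpace ℝ (Fin n), 0 < ⟪-v, y - z⟫ → ⟪v, y⟫ ≠ c := by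
    intro y hy; rw [hinzc'] at hy; intro h; rw [h] at hy; linarith
  ---- final case analysis on the position of x₀
  rcases lt_trichotomy (⟪v, x₀⟫) c with hlt | heq | hgt
  · exact main (-v) hoffneg x₀ yn hx₀fr hynfr
      (by rw [hinzc']; linarith) hync hgx₀ hgyn
  · obtain ⟨δ₀, hδ₀0, hδ₀⟩ := hlightnear x₀ hx₀fr hgx₀
    have hvx₀z : ⟪v, x₀⟫ = ⟪v, z⟫ := by rw [heq, hzc]
    have hw₀ : v - ⟪v, ν x₀⟫ • ν x₀ ≠ 0 := aux_notpar hν hz hx₀fr hv hvx₀z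
    obtain ⟨P, hPfr, hPd, hPw⟩ := aux_crossing hν hbd hx₀fr hw₀ hδ₀0
    have hPc : 0 < ⟪v, P - z⟫ := by
      have h1 : ⟪v, P - x₀⟫ = ⟪v, P⟫ - c := by rw [inner_sub_right, heq]
      rw [hinzc]; rw [h1] at hPw; linarith
    exact main v hoffpos P yp hPfr hypfr hPc hypc (hδ₀ P hPfr hPd) hgyp
  · exact main v hoffpos x₀ yp hx₀fr hypfr
      (by rw [hinzc]; linarith) hypc hgx₀ hgyp
end

section
/- Let n ≥ 3 and let f : U → ℝ be of class C³ on a neighborhood U of 0 in ℝ^{n−1}, with f(0) = 0, Df(0) = 0 and D²f(0)[a,b] = ⟨a,b⟩. Let m > 0 and let g : V → ℝ be a C³ function on a neighborhood V of 0 in ℝ^{n−2} with g(0) = 0 satisfying the section equation −g(y) + m·f(g(y), y) = 0 for all y ∈ V. Then Dg(0) = 0, D²g(0)[a,b] = m⟨a,b⟩, and D³g(0)[a,b,c] = m·D³f(0)[(0,a),(0,b),(0,c)] for all a, b, c ∈ ℝ^{n−2}. -/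
open scoped RealInnerProductSpace

section Aux
variable {E F G : Type*} [NormedAddCommGroup E] [NormedSpace ℝ E]
  [NormedAddCommGroup F] [NormedSpace ℝ F] [NormedAddCommGroup G] [NormedSpace ℝ G]

theorem aux_clm_apply_const {c : E → F →L[ℝ] G} {x : E}
    (hc : DifferentiableAt ℝ c x) (b : F) :
    fderiv ℝ (fun y => c y b) x = (fderiv ℝ c x).flip b := by
  rw [fderiv_clm_apply hc (differentiableAt_const b)]
  simp

theorem aux_itf3 (f : E → F) (z : E) (a b c : E) :
    iteratedFDeriv ℝ 3 f z ![a, b, c] =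
      fderiv ℝ (fderiv ℝ (fderiv ℝ f)) z a b c := by
  have h := iteratedFDeriv_succ_apply_right (𝕜 := ℝ) (f := f) (x := z) (n := 2) ![a, b, c]
  rw [h, iteratedFDeriv_two_apply]
  have h0 : Fin.init ![a, b, c] 0 = a := rfl
  have h1 : Fin.init ![a, b, c] 1 = b := rfl
  have h2 : (![a, b, c] : Fin 3 → E) (Fin.last 2) = c := rfl
  rw [h0, h1, h2]

theorem aux_clm_apply_const₁ {c : E → F →L[ℝ] G} {x : E}
    (hc : DifferentiableAt ℝ c x) (u : F) (a : E) :
    fderiv ℝ (fun y => c y u) x a = fderiv ℝ c x a u := by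
  rw [aux_clm_apply_const hc u]
  simp

theorem aux_clm_apply_const₂ {H : Type*} [NormedAddCommGroup H] [NormedSpace ℝ H]
    {c : E → F →L[ℝ] G →L[ℝ] H} {x : E}
    (hc : DifferentiableAt ℝ c x) (u : F) (v : G) (a : E) :
    fderiv ℝ (fun y => c y u v) x a = fderiv ℝ c x a u v := by
  have h1 : fderiv ℝ (fun y => c y u) x = (fderiv ℝ c x).flip u :=
    aux_clm_apply_const hc u
  have h2 : fderiv ℝ (fun y => c y u v) x = (fderiv ℝ (fun y => c y u) x).flip v :=
    aux_clm_apply_const (hc.clm_apply (differentiableAt_const u)) v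
  rw [h2, h1]
  simp

end Aux

set_option maxHeartbeats 2000000 in
theorem aux_main {E : Type*} [NormedAddCommGroup E] [InnerProductSpace ℝ E]
    (f : ℝ × E → ℝ)
    (U : Set (ℝ × E)) (hU : U ∈ nhds 0)
    (hf : ContDiffOn ℝ 3 f U)
    (hDf0 : fderiv ℝ f 0 = 0)
    (hD2f : ∀ (s t : ℝ) (a b : E),
      iteratedFDeriv ℝ 2 f 0 ![(s, a), (t, b)] = s * t + ⟪a, b⟫)
    (m : ℝ)
    (g : E → ℝ)
    (V : Set E) (hV : V ∈ nhds 0)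
    (hg : ContDiffOn ℝ 3 g V) (hg0 : g 0 = 0)
    (hsec : ∀ y ∈ V, -g y + m * f (g y, y) = 0) :
    fderiv ℝ g 0 = 0 ∧
    (∀ a b : E, iteratedFDeriv ℝ 2 g 0 ![a, b] = m * ⟪a, b⟫) ∧
    (∀ a b c : E,
      iteratedFDeriv ℝ 3 g 0 ![a, b, c] =
        m * iteratedFDeriv ℝ 3 f 0 ![((0 : ℝ), a), ((0 : ℝ), b), ((0 : ℝ), c)]) := by
  letI : NormedSpace ℝ E := InnerProductSpace.toNormedSpace
  have hfa : ContDiffAt ℝ 3 f 0 := hf.contDiffAt hU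
  have hga : ContDiffAt ℝ 3 g 0 := hg.contDiffAt hV
  have hfe : ∀ᶠ x in nhds (0 : ℝ × E), ContDiffAt ℝ 3 f x := hfa.eventually (by norm_num)
  have hge : ∀ᶠ y in nhds (0 : E), ContDiffAt ℝ 3 g y := hga.eventually (by norm_num)
  have hq0 : ((g 0, 0) : ℝ × E) = 0 := by rw [hg0]; rfl
  -- f is C³ at (g y, y) for y near 0
  have hfq : ∀ᶠ y in nhds (0 : E), ContDiffAt ℝ 3 f ((g y, y) : ℝ × E) := by
    have hqc : ContinuousAt (fun y : E => ((g y, y) : ℝ × E)) 0 :=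
      (hga.continuousAt).prodMk continuousAt_id
    have ht : Filter.Tendsto (fun y : E => ((g y, y) : ℝ × E)) (nhds 0) (nhds 0) := by
      simpa [hq0] using hqc.tendsto
    exact ht.eventually hfe
  -- the composed function φ z = f (g z, z)
  have hφe : ∀ᶠ y in nhds (0 : E), ContDiffAt ℝ 3 (fun z : E => f (g z, z)) y := by
    filter_upwards [hge, hfq] with y hy1 hy2
    exact ContDiffAt.comp (g := f) (f := fun z : E => ((g z, z) : ℝ × E)) y hy2
      (hy1.prodMk contDiffAt_id)
  have hφa : ContDiffAt ℝ 3 (fun z : E => f (g z, z)) 0 := hφe.self_of_nhds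
  have hDφe : ∀ᶠ y in nhds (0 : E), ContDiffAt ℝ 2 (fderiv ℝ (fun z : E => f (g z, z))) y :=
    hφe.mono fun y hy => hy.fderiv_right (by norm_num)
  have hDge : ∀ᶠ y in nhds (0 : E), ContDiffAt ℝ 2 (fderiv ℝ g) y :=
    hge.mono fun y hy => hy.fderiv_right (by norm_num)
  have hDfq : ∀ᶠ y in nhds (0 : E), ContDiffAt ℝ 2 (fderiv ℝ f) ((g y, y) : ℝ × E) :=
    hfq.mono fun y hy => hy.fderiv_right (by norm_num)
  -- chain rule, eventually
  have hchain : ∀ᶠ y in nhds (0 : E), ∀ c : E,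
      fderiv ℝ (fun z : E => f (g z, z)) y c
        = fderiv ℝ f ((g y, y) : ℝ × E) (fderiv ℝ g y c, c) := by
    filter_upwards [hge, hfq] with y hy1 hy2
    intro c
    have hgd : DifferentiableAt ℝ g y := hy1.differentiableAt (by norm_num)
    have hqd : DifferentiableAt ℝ (fun z : E => ((g z, z) : ℝ × E)) y :=
      hgd.prodMk differentiableAt_id
    have h := fderiv_comp (g := f) (f := fun z : E => ((g z, z) : ℝ × E)) y
      (hy2.differentiableAt (by norm_num)) hqd
    have hq' : fderiv ℝ (fun z : E => ((g z, z) : ℝ × E)) y =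
        (fderiv ℝ g y).prod (ContinuousLinearMap.id ℝ E) :=
      (hgd.hasFDerivAt.prodMk (hasFDerivAt_id y)).fderiv
    rw [show (fun z : E => f (g z, z)) = f ∘ (fun z : E => ((g z, z) : ℝ × E)) from rfl,
      h, hq']
    simp
  -- first derivative of φ at 0 vanishes
  have hDφ0 : fderiv ℝ (fun z : E => f (g z, z)) 0 = 0 := by
    ext c
    rw [hchain.self_of_nhds c, hq0, hDf0]
    simp
  -- g agrees with m * φ near 0
  have heq : g =ᶠ[nhds (0 : E)] fun y => m * f (g y, y) := by
    filter_upwards [hV] with y hy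
    have := hsec y hy
    linarith
  have hDgeq : fderiv ℝ g =ᶠ[nhds (0 : E)]
      fun y => m • fderiv ℝ (fun z : E => f (g z, z)) y := by
    filter_upwards [heq.fderiv (𝕜 := ℝ), hφe] with y h hy
    rw [h, fderiv_const_mul (hy.differentiableAt (by norm_num)) m]
  have hDg0 : fderiv ℝ g 0 = 0 := by
    rw [hDgeq.self_of_nhds]
    simp [hDφ0]
  -- second derivative of f at 0
  have hD2f0 : ∀ u v : ℝ × E, fderiv ℝ (fderiv ℝ f) 0 u v = u.1 * v.1 + ⟪u.2, v.2⟫ := by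
    intro u v
    have h := hD2f u.1 v.1 u.2 v.2
    rw [iteratedFDeriv_two_apply] at h
    simp only [Matrix.cons_val_zero, Matrix.cons_val_one, Matrix.head_cons] at h
    simpa using h
  -- derivative of the field y ↦ Df (g y, y), eventually
  have hDfqform : ∀ᶠ y in nhds (0 : E), ∀ b : E,
      fderiv ℝ (fun z : E => fderiv ℝ f ((g z, z) : ℝ × E)) y b
        = fderiv ℝ (fderiv ℝ f) ((g y, y) : ℝ × E) (fderiv ℝ g y b, b) := by
    filter_upwards [hge, hDfq] with y hy1 hy2
    intro b
    have hgd : DifferentiableAt ℝ g y := hy1.differentiableAt (by norm_num)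
    have hqd : DifferentiableAt ℝ (fun z : E => ((g z, z) : ℝ × E)) y :=
      hgd.prodMk differentiableAt_id
    have h := fderiv_comp (g := fderiv ℝ f) (f := fun z : E => ((g z, z) : ℝ × E)) y
      (hy2.differentiableAt (by norm_num)) hqd
    have hq' : fderiv ℝ (fun z : E => ((g z, z) : ℝ × E)) y =
        (fderiv ℝ g y).prod (ContinuousLinearMap.id ℝ E) :=
      (hgd.hasFDerivAt.prodMk (hasFDerivAt_id y)).fderiv
    rw [show (fun z : E => fderiv ℝ f ((g z, z) : ℝ × E))
        = (fderiv ℝ f) ∘ (fun z : E => ((g z, z) : ℝ × E)) from rfl, h, hq']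
    simp
  -- second derivative of φ, eventually
  have hD2form : ∀ᶠ y in nhds (0 : E), ∀ b c : E,
      fderiv ℝ (fderiv ℝ (fun z : E => f (g z, z))) y b c =
        fderiv ℝ f ((g y, y) : ℝ × E)
            (fderiv ℝ (fun z : E => fderiv ℝ g z c) y b, 0)
          + fderiv ℝ (fderiv ℝ f) ((g y, y) : ℝ × E) (fderiv ℝ g y b, b)
              (fderiv ℝ g y c, c) := by
    filter_upwards [hDφe, hge, hfq, hDfq, hDge, hchain.eventually_nhds, hDfqform]
      with y h1 h2 h3 h4 h5 h6 h7
    intro b c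
    have hs1 : fderiv ℝ (fderiv ℝ (fun z : E => f (g z, z))) y b c
        = fderiv ℝ (fun z : E => fderiv ℝ (fun w : E => f (g w, w)) z c) y b :=
      (aux_clm_apply_const₁ (h1.differentiableAt (by norm_num)) c b).symm
    have he : (fun z : E => fderiv ℝ (fun w : E => f (g w, w)) z c) =ᶠ[nhds y]
        (fun z : E => fderiv ℝ f ((g z, z) : ℝ × E) (fderiv ℝ g z c, c)) :=
      h6.mono fun z hz => hz c
    rw [hs1, he.fderiv_eq]
    have hgd : DifferentiableAt ℝ g y := h2.differentiableAt (by norm_num)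
    have hcd : DifferentiableAt ℝ (fun z : E => fderiv ℝ f ((g z, z) : ℝ × E)) y :=
      DifferentiableAt.comp (g := fderiv ℝ f) (f := fun z : E => ((g z, z) : ℝ × E)) y
        (h4.differentiableAt (by norm_num)) (hgd.prodMk differentiableAt_id)
    have hGcd : DifferentiableAt ℝ (fun z : E => fderiv ℝ g z c) y :=
      (h5.differentiableAt (by norm_num)).clm_apply (differentiableAt_const c)
    have hud : DifferentiableAt ℝ (fun z : E => ((fderiv ℝ g z c, c) : ℝ × E)) y :=
      hGcd.prodMk (differentiableAt_const c)
    rw [fderiv_clm_apply hcd hud]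
    have hu' : fderiv ℝ (fun z : E => ((fderiv ℝ g z c, c) : ℝ × E)) y
        = (fderiv ℝ (fun z : E => fderiv ℝ g z c) y).prod 0 :=
      (hGcd.hasFDerivAt.prodMk (hasFDerivAt_const c y)).fderiv
    rw [ContinuousLinearMap.add_apply, ContinuousLinearMap.comp_apply, hu',
      ContinuousLinearMap.flip_apply, h7 b]
    simp
  -- second derivative of φ at 0
  have hD2φ0 : ∀ b c : E,
      fderiv ℝ (fderiv ℝ (fun z : E => f (g z, z))) 0 b c = ⟪b, c⟫ := by
    intro b c
    have h := hD2form.self_of_nhds b c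
    rw [hq0, hDf0] at h
    rw [h, hD2f0]
    simp [hDg0]
  have hD2geq : fderiv ℝ (fderiv ℝ g) =ᶠ[nhds (0 : E)]
      fun y => m • fderiv ℝ (fderiv ℝ (fun z : E => f (g z, z))) y := by
    filter_upwards [hDgeq.fderiv (𝕜 := ℝ), hDφe] with y h hy
    rw [h, fderiv_fun_const_smul (hy.differentiableAt (by norm_num)) m]
  -- second derivative of g at 0
  have hD2g0 : fderiv ℝ (fderiv ℝ g) 0
      = m • fderiv ℝ (fderiv ℝ (fun z : E => f (g z, z))) 0 := hD2geq.self_of_nhds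
  have hconc2 : ∀ a b : E, iteratedFDeriv ℝ 2 g 0 ![a, b] = m * ⟪a, b⟫ := by
    intro a b
    rw [iteratedFDeriv_two_apply]
    simp only [Matrix.cons_val_zero, Matrix.cons_val_one, Matrix.head_cons]
    rw [hD2g0]
    simp [hD2φ0 a b]
  -- third derivative transfer from g to φ
  have hD2φd : DifferentiableAt ℝ (fderiv ℝ (fderiv ℝ (fun z : E => f (g z, z)))) 0 :=
    ((hφa.fderiv_right (m := 2) (by norm_num)).fderiv_right (m := 1) (by norm_num)).differentiableAt
      (by norm_num)
  have hD3g0 : fderiv ℝ (fderiv ℝ (fderiv ℝ g)) 0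
      = m • fderiv ℝ (fderiv ℝ (fderiv ℝ (fun z : E => f (g z, z)))) 0 :=
    hD2geq.fderiv_eq.trans (fderiv_fun_const_smul (𝕜 := ℝ)
      (f := fderiv ℝ (fderiv ℝ (fun z : E => f (g z, z)))) (R := ℝ) hD2φd m)
  -- derivative of the field y ↦ D²f (g y, y) at 0
  have hgd0 : DifferentiableAt ℝ g 0 := hga.differentiableAt (by norm_num)
  have hqd0 : DifferentiableAt ℝ (fun z : E => ((g z, z) : ℝ × E)) 0 :=
    hgd0.prodMk differentiableAt_id
  have hDgd0 : DifferentiableAt ℝ (fderiv ℝ g) 0 :=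
    (hga.fderiv_right (m := 2) (by norm_num)).differentiableAt (by norm_num)
  have hDGcd0 : ∀ c' : E, DifferentiableAt ℝ (fderiv ℝ (fun z : E => fderiv ℝ g z c')) 0 :=
    fun c' => (((hga.fderiv_right (m := 2) (by norm_num)).clm_apply
      contDiffAt_const).fderiv_right (m := 1) (by norm_num)).differentiableAt (by norm_num)
  have hDfqd0 : DifferentiableAt ℝ (fun z : E => fderiv ℝ f ((g z, z) : ℝ × E)) 0 := by
    have h : DifferentiableAt ℝ (fderiv ℝ f) ((g 0, 0) : ℝ × E) := by
      rw [hq0]; exact (hfa.fderiv_right (m := 2) (by norm_num)).differentiableAt (by norm_num)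
    exact DifferentiableAt.comp (g := fderiv ℝ f)
      (f := fun z : E => ((g z, z) : ℝ × E)) 0 h hqd0
  have hD2fqd0 : DifferentiableAt ℝ
      (fun z : E => fderiv ℝ (fderiv ℝ f) ((g z, z) : ℝ × E)) 0 := by
    have h : DifferentiableAt ℝ (fderiv ℝ (fderiv ℝ f)) ((g 0, 0) : ℝ × E) := by
      rw [hq0]
      exact ((hfa.fderiv_right (m := 2) (by norm_num)).fderiv_right (m := 1) (by norm_num)).differentiableAt
        (by norm_num)
    exact DifferentiableAt.comp (g := fderiv ℝ (fderiv ℝ f))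
      (f := fun z : E => ((g z, z) : ℝ × E)) 0 h hqd0
  have hD3fq0 : ∀ a : E,
      fderiv ℝ (fun z : E => fderiv ℝ (fderiv ℝ f) ((g z, z) : ℝ × E)) 0 a
        = fderiv ℝ (fderiv ℝ (fderiv ℝ f)) 0 ((0 : ℝ), a) := by
    intro a
    have hD2fd : DifferentiableAt ℝ (fderiv ℝ (fderiv ℝ f)) ((g 0, 0) : ℝ × E) := by
      rw [hq0]
      exact ((hfa.fderiv_right (m := 2) (by norm_num)).fderiv_right (m := 1) (by norm_num)).differentiableAt
        (by norm_num)
    have h := fderiv_comp (g := fderiv ℝ (fderiv ℝ f))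
      (f := fun z : E => ((g z, z) : ℝ × E)) 0 hD2fd hqd0
    have hq' : fderiv ℝ (fun z : E => ((g z, z) : ℝ × E)) 0 =
        (fderiv ℝ g 0).prod (ContinuousLinearMap.id ℝ E) :=
      (hgd0.hasFDerivAt.prodMk (hasFDerivAt_id 0)).fderiv
    rw [show (fun z : E => fderiv ℝ (fderiv ℝ f) ((g z, z) : ℝ × E))
        = (fderiv ℝ (fderiv ℝ f)) ∘ (fun z : E => ((g z, z) : ℝ × E)) from rfl, h, hq']
    beta_reduce
    rw [hq0]
    simp [hDg0]
  -- third derivative of φ at 0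
  have hD3φ0 : ∀ a b c : E,
      fderiv ℝ (fderiv ℝ (fderiv ℝ (fun z : E => f (g z, z)))) 0 a b c
        = fderiv ℝ (fderiv ℝ (fderiv ℝ f)) 0 ((0 : ℝ), a) ((0 : ℝ), b) ((0 : ℝ), c) := by
    intro a b c
    have hs : fderiv ℝ (fderiv ℝ (fderiv ℝ (fun z : E => f (g z, z)))) 0 a b c
        = fderiv ℝ (fun y : E =>
            fderiv ℝ (fderiv ℝ (fun z : E => f (g z, z))) y b c) 0 a :=
      (aux_clm_apply_const₂ hD2φd b c a).symm
    have hev : (fun y : E => fderiv ℝ (fderiv ℝ (fun z : E => f (g z, z))) y b c)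
        =ᶠ[nhds (0 : E)]
        (fun y : E => fderiv ℝ f ((g y, y) : ℝ × E)
            (fderiv ℝ (fun z : E => fderiv ℝ g z c) y b, 0)
          + fderiv ℝ (fderiv ℝ f) ((g y, y) : ℝ × E) (fderiv ℝ g y b, b)
              (fderiv ℝ g y c, c)) :=
      hD2form.mono fun y hy => hy b c
    rw [hs, hev.fderiv_eq]
    -- differentiability of the two summands at 0
    have hud : DifferentiableAt ℝ
        (fun y : E => ((fderiv ℝ (fun z : E => fderiv ℝ g z c) y b, (0 : E)) : ℝ × E)) 0 :=
      ((hDGcd0 c).clm_apply (differentiableAt_const b)).prodMk (differentiableAt_const 0)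
    have hT1d : DifferentiableAt ℝ (fun y : E => fderiv ℝ f ((g y, y) : ℝ × E)
        (fderiv ℝ (fun z : E => fderiv ℝ g z c) y b, 0)) 0 := hDfqd0.clm_apply hud
    have hvd : DifferentiableAt ℝ (fun y : E => ((fderiv ℝ g y b, b) : ℝ × E)) 0 :=
      (hDgd0.clm_apply (differentiableAt_const b)).prodMk (differentiableAt_const b)
    have hwd : DifferentiableAt ℝ (fun y : E => ((fderiv ℝ g y c, c) : ℝ × E)) 0 :=
      (hDgd0.clm_apply (differentiableAt_const c)).prodMk (differentiableAt_const c)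
    have hPd : DifferentiableAt ℝ (fun y : E =>
        fderiv ℝ (fderiv ℝ f) ((g y, y) : ℝ × E) (fderiv ℝ g y b, b)) 0 :=
      hD2fqd0.clm_apply hvd
    have hT2d : DifferentiableAt ℝ (fun y : E =>
        fderiv ℝ (fderiv ℝ f) ((g y, y) : ℝ × E) (fderiv ℝ g y b, b)
          (fderiv ℝ g y c, c)) 0 := hPd.clm_apply hwd
    rw [fderiv_fun_add hT1d hT2d, ContinuousLinearMap.add_apply]
    have hT1 : fderiv ℝ (fun y : E => fderiv ℝ f ((g y, y) : ℝ × E)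
        (fderiv ℝ (fun z : E => fderiv ℝ g z c) y b, 0)) 0 a = 0 := by
      rw [fderiv_clm_apply hDfqd0 hud, ContinuousLinearMap.add_apply,
        ContinuousLinearMap.comp_apply, ContinuousLinearMap.flip_apply]
      beta_reduce
      rw [hDfqform.self_of_nhds a, hq0, hDf0, hDg0, hD2f0]
      simp
    have hw' : fderiv ℝ (fun y : E => ((fderiv ℝ g y c, c) : ℝ × E)) 0
        = (fderiv ℝ (fun y : E => fderiv ℝ g y c) 0).prod 0 :=
      ((hDgd0.clm_apply (differentiableAt_const c)).hasFDerivAt.prodMk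
        (hasFDerivAt_const c 0)).fderiv
    have hv' : fderiv ℝ (fun y : E => ((fderiv ℝ g y b, b) : ℝ × E)) 0
        = (fderiv ℝ (fun y : E => fderiv ℝ g y b) 0).prod 0 :=
      ((hDgd0.clm_apply (differentiableAt_const b)).hasFDerivAt.prodMk
        (hasFDerivAt_const b 0)).fderiv
    have hT2 : fderiv ℝ (fun y : E =>
        fderiv ℝ (fderiv ℝ f) ((g y, y) : ℝ × E) (fderiv ℝ g y b, b)
          (fderiv ℝ g y c, c)) 0 a
        = fderiv ℝ (fderiv ℝ (fderiv ℝ f)) 0 ((0 : ℝ), a) ((0 : ℝ), b) ((0 : ℝ), c) := by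
      rw [fderiv_clm_apply hPd hwd, ContinuousLinearMap.add_apply,
        ContinuousLinearMap.comp_apply, ContinuousLinearMap.flip_apply]
      beta_reduce
      rw [fderiv_clm_apply hD2fqd0 hvd, ContinuousLinearMap.add_apply,
        ContinuousLinearMap.comp_apply, ContinuousLinearMap.flip_apply]
      beta_reduce
      rw [hw', hv', hD3fq0 a, hq0, hDg0]
      simp [hD2f0]
    rw [hT1, hT2, zero_add]
  -- conclusion
  refine ⟨hDg0, hconc2, ?_⟩
  intro a b c
  rw [aux_itf3 g 0 a b c, aux_itf3 f 0 _ _ _, hD3g0]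
  simp [hD3φ0 a b c]

/-- jets of the hyperplane section of the graph `xₙ = f(x₁, y)`
by the hyperplane with normal `-e₁ + m eₙ`.  Here `f` is `C³` near `0` with
`f(0) = 0`, `Df(0) = 0`, `D²f(0)[a,b] = ⟨a,b⟩`, the section is parametrized
over `y` by `(g(y), y, f(g(y), y))` via the section equation
`-g(y) + m·f(g(y), y) = 0`.  Then `Dg(0) = 0`, `D²g(0)[a,b] = m⟨a,b⟩` and
`D³g(0)[a,b,c] = m·D³f(0)[(0,a),(0,b),(0,c)]`. -/
theorem section_jets_at_origin
    (n : ℕ) (hn : 3 ≤ n)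
    (f : ℝ × EuclideanSpace ℝ (Fin (n - 2)) → ℝ)
    (U : Set (ℝ × EuclideanSpace ℝ (Fin (n - 2)))) (hU : U ∈ nhds 0)
    (hf : ContDiffOn ℝ 3 f U)
    (hf0 : f 0 = 0) (hDf0 : fderiv ℝ f 0 = 0)
    (hD2f : ∀ (s t : ℝ) (a b : EuclideanSpace ℝ (Fin (n - 2))),
      iteratedFDeriv ℝ 2 f 0 ![(s, a), (t, b)] = s * t + ⟪a, b⟫)
    (m : ℝ) (hm : 0 < m)
    (g : EuclideanSpace ℝ (Fin (n - 2)) → ℝ)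
    (V : Set (EuclideanSpace ℝ (Fin (n - 2)))) (hV : V ∈ nhds 0)
    (hg : ContDiffOn ℝ 3 g V) (hg0 : g 0 = 0)
    (hsec : ∀ y ∈ V, -g y + m * f (g y, y) = 0) :
    fderiv ℝ g 0 = 0 ∧
    (∀ a b : EuclideanSpace ℝ (Fin (n - 2)),
      iteratedFDeriv ℝ 2 g 0 ![a, b] = m * ⟪a, b⟫) ∧
    (∀ a b c : EuclideanSpace ℝ (Fin (n - 2)),
      iteratedFDeriv ℝ 3 g 0 ![a, b, c] =
        m * iteratedFDeriv ℝ 3 f 0 ![((0 : ℝ), a), ((0 : ℝ), b), ((0 : ℝ), c)]) :=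
  aux_main f U hU hf hDf0 hD2f m g V hV hg hg0 hsec
end

section
/- Let n ≥ 3 and let f : U → ℝ be of class C³ on a neighborhood U of 0 in ℝ^{n−1}, with f(0) = 0, Df(0) = 0 and D²f(0)[a,b] = ⟨a,b⟩. Let r > 0 and let g : V → ℝ be a C² function on a neighborhood V of 0 in ℝ^{n−2} with g(0) = 0 satisfying the shadow-boundary equation (∂₁f)(g(y),y)·(g(y) − r) + (Df)(g(y),y)[y] − f(g(y),y) = 0 for all y ∈ V, where ∂₁ is the partial derivative in the first coordinate and D is the derivative in the y-variables. Then Dg(0) = 0 and D²g(0)[a,b] = −D²(∂₁f)(0)[a,b] + r^{-1}⟨a,b⟩ for all a, b ∈ ℝ^{n−2}, where D²(∂₁f)(0) is the second derivative of ∂₁f in the y-variables at 0. -/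
open scoped RealInnerProductSpace

open Filter ContinuousLinearMap

set_option maxHeartbeats 2000000 in
theorem shadow_aux {E : Type*} [NormedAddCommGroup E] [InnerProductSpace ℝ E]
    (f : ℝ × E → ℝ) (U : Set (ℝ × E)) (hU : U ∈ nhds 0)
    (hf : ContDiffOn ℝ 3 f U)
    (hDf0 : fderiv ℝ f 0 = 0)
    (hD2f : ∀ (s t : ℝ) (a b : E),
      iteratedFDeriv ℝ 2 f 0 ![(s, a), (t, b)] = s * t + ⟪a, b⟫)
    (r : ℝ) (hr : 0 < r)
    (g : E → ℝ) (V : Set E) (hV : V ∈ nhds 0)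
    (hg : ContDiffOn ℝ 2 g V) (hg0 : g 0 = 0)
    (hshadow : ∀ y ∈ V,
      fderiv ℝ f (g y, y) ((1 : ℝ), (0 : E)) * (g y - r)
        + fderiv ℝ f (g y, y) ((0 : ℝ), y) - f (g y, y) = 0) :
    fderiv ℝ g 0 = 0 ∧
    (∀ a b : E,
      iteratedFDeriv ℝ 2 g 0 ![a, b] =
        -(iteratedFDeriv ℝ 2 (fun z => fderiv ℝ f z ((1 : ℝ), (0 : E))) 0
            ![((0 : ℝ), a), ((0 : ℝ), b)]) + r⁻¹ * ⟪a, b⟫) := by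
  letI : NormedSpace ℝ E := inferInstance
  set A := fderiv ℝ f with hA
  set h : E → ℝ × E := fun y => (g y, y) with hh
  have h0 : h 0 = 0 := by simp [hh, hg0, Prod.ext_iff]
  have hfc : ContDiffAt ℝ 3 f 0 := hf.contDiffAt hU
  have hgc : ContDiffAt ℝ 2 g 0 := hg.contDiffAt hV
  have hAc : ContDiffAt ℝ 2 A 0 := hfc.fderiv_right (by norm_num)
  have hA0 : A 0 = 0 := hDf0
  have hA'v : ∀ (s t : ℝ) (a b : E), fderiv ℝ A 0 (s, a) (t, b) = s * t + ⟪a, b⟫ := by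
    intro s t a b
    have := hD2f s t a b
    rw [iteratedFDeriv_two_apply] at this
    simpa [hA] using this
  -- the eventual derivative of the shadow equation
  set Ψ : E → (E →L[ℝ] ℝ) := fun y =>
      A (h y) ((1:ℝ),(0:E)) • fderiv ℝ g y
      + (g y - r) • ((A (h y)).comp (0 : E →L[ℝ] ℝ × E)
          + ((fderiv ℝ A (h y)).comp
              ((fderiv ℝ g y).prod (ContinuousLinearMap.id ℝ E))).flip ((1:ℝ),(0:E)))
      + ((A (h y)).comp ((0 : E →L[ℝ] ℝ).prod (ContinuousLinearMap.id ℝ E))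
          + ((fderiv ℝ A (h y)).comp
              ((fderiv ℝ g y).prod (ContinuousLinearMap.id ℝ E))).flip ((0:ℝ), y))
      - (A (h y)).comp ((fderiv ℝ g y).prod (ContinuousLinearMap.id ℝ E)) with hΨ
  set Φ : E → ℝ := fun y =>
      A (h y) ((1:ℝ),(0:E)) * (g y - r) + A (h y) ((0:ℝ), y) - f (h y) with hΦ
  have hev : ∀ᶠ y in nhds 0, HasFDerivAt Φ (Ψ y) y := by
    have e1 : ∀ᶠ y in nhds 0, ContDiffAt ℝ 2 g y := hgc.eventually (by simp)
    have hco : Tendsto h (nhds 0) (nhds 0) := by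
      rw [← h0]
      exact (hgc.continuousAt.prodMk continuousAt_id)
    have e2 : ∀ᶠ y in nhds 0, ContDiffAt ℝ 3 f (h y) :=
      hco.eventually (hfc.eventually (by simp))
    filter_upwards [e1, e2] with y hgy hfy
    have hgyd : HasFDerivAt g (fderiv ℝ g y) y :=
      (hgy.differentiableAt (by norm_num)).hasFDerivAt
    have hhyd : HasFDerivAt h ((fderiv ℝ g y).prod (ContinuousLinearMap.id ℝ E)) y :=
      hgyd.prodMk (hasFDerivAt_id y)
    have hfyd : HasFDerivAt f (A (h y)) (h y) :=
      (hfy.differentiableAt (by norm_num)).hasFDerivAt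
    have hAyd : HasFDerivAt A (fderiv ℝ A (h y)) (h y) :=
      ((hfy.fderiv_right (show (2:WithTop ℕ∞) + 1 ≤ 3 by norm_num)).differentiableAt
        (by norm_num)).hasFDerivAt
    have hAh : HasFDerivAt (fun y => A (h y))
        ((fderiv ℝ A (h y)).comp ((fderiv ℝ g y).prod (ContinuousLinearMap.id ℝ E))) y :=
      hAyd.comp y hhyd
    exact (((hAh.clm_apply (hasFDerivAt_const ((1:ℝ),(0:E)) y)).mul (hgyd.sub_const r)).add
        (hAh.clm_apply ((hasFDerivAt_const (0:ℝ) y).prodMk (hasFDerivAt_id y)))).sub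
        (hfyd.comp y hhyd)
  have hΦ0 : ∀ᶠ y in nhds 0, Φ y = 0 := eventually_of_mem hV hshadow
  have hΨ0 : ∀ᶠ y in nhds 0, Ψ y = 0 := by
    filter_upwards [hev, hΦ0.eventually_nhds] with y h1 h2
    have h3 : fderiv ℝ Φ y = 0 := by
      have h4 : fderiv ℝ Φ y = fderiv ℝ (fun _ => (0:ℝ)) y :=
        Filter.EventuallyEq.fderiv_eq h2
      simpa using h4
    rw [← h1.fderiv]
    exact h3
  -- Part 1
  have hL : fderiv ℝ g 0 = 0 := by
    ext a
    have h1 : Ψ 0 a = 0 := by rw [hΨ0.self_of_nhds]; rfl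
    simp only [hΨ, h0, hg0, hA0, ContinuousLinearMap.add_apply,
      ContinuousLinearMap.coe_smul', Pi.smul_apply, smul_eq_mul,
      ContinuousLinearMap.coe_comp', Function.comp_apply, ContinuousLinearMap.flip_apply,
      ContinuousLinearMap.coe_sub', Pi.sub_apply, ContinuousLinearMap.zero_apply,
      ContinuousLinearMap.prod_apply, ContinuousLinearMap.coe_id', id_eq,
      ContinuousLinearMap.map_zero, zero_mul, zero_add, zero_sub, sub_zero, hA'v,
      inner_zero_right, mul_one, add_zero, mul_zero, zero_smul] at h1
    have : -(r * fderiv ℝ g 0 a) = 0 := by linarith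
    have hra := mul_eq_zero.mp (by linarith : r * fderiv ℝ g 0 a = 0)
    simpa [hr.ne'] using hra
  refine ⟨hL, ?_⟩
  intro a b
  have hgcd : ContDiffAt ℝ 1 (fderiv ℝ g) 0 := hgc.fderiv_right (by norm_num)
  have hgdd : HasFDerivAt (fderiv ℝ g) (fderiv ℝ (fderiv ℝ g) 0) 0 :=
    (hgcd.differentiableAt (by norm_num)).hasFDerivAt
  have hAcd : ContDiffAt ℝ 1 (fderiv ℝ A) 0 := hAc.fderiv_right (by norm_num)
  have hAddh : HasFDerivAt (fderiv ℝ A) (fderiv ℝ (fderiv ℝ A) (h 0)) (h 0) := by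
    rw [h0]; exact (hAcd.differentiableAt (by norm_num)).hasFDerivAt
  have hAdh : HasFDerivAt A (fderiv ℝ A (h 0)) (h 0) := by
    rw [h0]; exact (hAc.differentiableAt (by norm_num)).hasFDerivAt
  have hgd : HasFDerivAt g (fderiv ℝ g 0) 0 := (hgc.differentiableAt (by norm_num)).hasFDerivAt
  have hhd : HasFDerivAt h ((fderiv ℝ g 0).prod (ContinuousLinearMap.id ℝ E)) 0 :=
    hgd.prodMk (hasFDerivAt_id 0)
  have k2 : HasFDerivAt (fun y => fderiv ℝ g y b)
      ((fderiv ℝ g 0).comp (0 : E →L[ℝ] E) + (fderiv ℝ (fderiv ℝ g) 0).flip b) 0 :=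
    hgdd.clm_apply (hasFDerivAt_const b 0)
  have k3 : HasFDerivAt (fun y => (fderiv ℝ g y b, b))
      (((fderiv ℝ g 0).comp (0 : E →L[ℝ] E) + (fderiv ℝ (fderiv ℝ g) 0).flip b).prod
        (0 : E →L[ℝ] E)) 0 := k2.prodMk (hasFDerivAt_const b 0)
  have k4 : HasFDerivAt (fun y => A (h y))
      ((fderiv ℝ A (h 0)).comp ((fderiv ℝ g 0).prod (ContinuousLinearMap.id ℝ E))) 0 :=
    hAdh.comp 0 hhd
  have k5 : HasFDerivAt (fun y => fderiv ℝ A (h y))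
      ((fderiv ℝ (fderiv ℝ A) (h 0)).comp
        ((fderiv ℝ g 0).prod (ContinuousLinearMap.id ℝ E))) 0 :=
    HasFDerivAt.comp (g := fderiv ℝ A) 0 hAddh hhd
  have kW := k5.clm_apply k3
  have kV := kW.clm_apply (hasFDerivAt_const ((1:ℝ),(0:E)) 0)
  have hT := ((((k4.clm_apply (hasFDerivAt_const ((1:ℝ),(0:E)) 0)).mul k2).add
      ((hgd.sub_const r).mul kV)).add
      ((k4.clm_apply (hasFDerivAt_const ((0:ℝ), b) 0)).add
        (kW.clm_apply ((hasFDerivAt_const (0:ℝ) 0).prodMk (hasFDerivAt_id 0))))).sub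
      (k4.clm_apply k3)
  have hpsi0 : ∀ᶠ y in nhds 0,
      (A (h y) ((1:ℝ),(0:E)) * fderiv ℝ g y b
        + (g y - r) * fderiv ℝ A (h y) (fderiv ℝ g y b, b) ((1:ℝ),(0:E))
        + (A (h y) ((0:ℝ), b) + fderiv ℝ A (h y) (fderiv ℝ g y b, b) ((0:ℝ), y))
        - A (h y) (fderiv ℝ g y b, b)) = (0:ℝ) := by
    filter_upwards [hΨ0] with y hy
    have h1 : Ψ y b = 0 := by rw [hy]; rfl
    simp only [hΨ, ContinuousLinearMap.add_apply, ContinuousLinearMap.coe_smul',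
      Pi.smul_apply, smul_eq_mul, ContinuousLinearMap.coe_comp', Function.comp_apply,
      ContinuousLinearMap.flip_apply, ContinuousLinearMap.coe_sub', Pi.sub_apply,
      ContinuousLinearMap.zero_apply, ContinuousLinearMap.prod_apply,
      ContinuousLinearMap.coe_id', id_eq, map_zero, mul_zero, add_zero, zero_add] at h1
    linarith [h1]
  have hT0 : HasFDerivAt (fun y =>
      A (h y) ((1:ℝ),(0:E)) * fderiv ℝ g y b
        + (g y - r) * fderiv ℝ A (h y) (fderiv ℝ g y b, b) ((1:ℝ),(0:E))
        + (A (h y) ((0:ℝ), b) + fderiv ℝ A (h y) (fderiv ℝ g y b, b) ((0:ℝ), y))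
        - A (h y) (fderiv ℝ g y b, b)) (0 : E →L[ℝ] ℝ) 0 :=
    (hasFDerivAt_const (0:ℝ) 0).congr_of_eventuallyEq hpsi0
  have hD2 := hT.unique hT0
  have keya := DFunLike.congr_fun hD2 a
  simp only [h0, hg0, hA0, hL, ContinuousLinearMap.add_apply,
    ContinuousLinearMap.coe_smul', Pi.smul_apply, smul_eq_mul,
    ContinuousLinearMap.coe_comp', Function.comp_apply, ContinuousLinearMap.flip_apply,
    ContinuousLinearMap.coe_sub', Pi.sub_apply, ContinuousLinearMap.zero_apply,
    ContinuousLinearMap.prod_apply, ContinuousLinearMap.coe_id', id_eq,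
    Prod.mk_zero_zero, Prod.snd_zero, Prod.fst_zero, map_zero, hA'v, inner_zero_right, inner_zero_left,
    mul_one, mul_zero, zero_mul, add_zero, zero_add, zero_sub, sub_zero] at keya
  have hQ : fderiv ℝ (fderiv ℝ (fun z => A z ((1:ℝ),(0:E)))) 0 =
      (ContinuousLinearMap.compL ℝ (ℝ × E) ((ℝ × E) →L[ℝ] ℝ) ℝ
        (ContinuousLinearMap.apply ℝ ℝ ((1:ℝ),(0:E)))).comp (fderiv ℝ (fderiv ℝ A) 0) := by
    have e3 : ∀ᶠ z in nhds (0:ℝ×E), fderiv ℝ (fun z => A z ((1:ℝ),(0:E))) z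
        = (ContinuousLinearMap.compL ℝ (ℝ × E) ((ℝ × E) →L[ℝ] ℝ) ℝ
            (ContinuousLinearMap.apply ℝ ℝ ((1:ℝ),(0:E)))) (fderiv ℝ A z) := by
      filter_upwards [hAc.eventually (by simp)] with z hz
      rw [ContinuousLinearMap.compL_apply]
      exact ((ContinuousLinearMap.apply ℝ ℝ ((1:ℝ),(0:E))).hasFDerivAt.comp z
        ((hz.differentiableAt (by norm_num)).hasFDerivAt)).fderiv
    rw [Filter.EventuallyEq.fderiv_eq e3]
    exact ((ContinuousLinearMap.compL ℝ (ℝ × E) ((ℝ × E) →L[ℝ] ℝ) ℝ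
        (ContinuousLinearMap.apply ℝ ℝ ((1:ℝ),(0:E)))).hasFDerivAt.comp 0
        ((hAcd.differentiableAt (by norm_num)).hasFDerivAt)).fderiv
  have hQab : iteratedFDeriv ℝ 2 (fun z => A z ((1:ℝ),(0:E))) 0
        ![((0:ℝ), a), ((0:ℝ), b)]
      = fderiv ℝ (fderiv ℝ A) 0 ((0:ℝ), a) ((0:ℝ), b) ((1:ℝ),(0:E)) := by
    rw [iteratedFDeriv_two_apply]
    simp only [Matrix.cons_val_zero, Matrix.cons_val_one, Matrix.head_cons]
    rw [hQ]
    rfl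
  rw [iteratedFDeriv_two_apply]
  simp only [Matrix.cons_val_zero, Matrix.cons_val_one, Matrix.head_cons]
  rw [hQab]
  have hinner := real_inner_comm a b
  have hrne : r ≠ 0 := hr.ne'
  field_simp at keya ⊢
  linarith [keya]

/-- jets of the shadow boundary of the graph `xₙ = f(x₁, y)`
created by the point light source `r·e₁` on the tangent hyperplane at the
origin.  Here `f` is `C³` near `0` with `f(0) = 0`, `Df(0) = 0`,
`D²f(0)[a,b] = ⟨a,b⟩`, and the shadow boundary is parametrized over `y` by
`(g(y), y, f(g(y), y))` via the shadow-boundary equation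
`∂₁f(g(y),y)·(g(y) − r) + Df(g(y),y)[y] − f(g(y),y) = 0` (where `∂₁` is the
partial derivative in the first coordinate and `D` the derivative in the
`y`-variables).  Then `Dg(0) = 0` and
`D²g(0)[a,b] = −D²(∂₁f)(0)[a,b] + r⁻¹⟨a,b⟩`. -/
theorem shadow_boundary_jets_at_origin
    (n : ℕ) (hn : 3 ≤ n)
    (f : ℝ × EuclideanSpace ℝ (Fin (n - 2)) → ℝ)
    (U : Set (ℝ × EuclideanSpace ℝ (Fin (n - 2)))) (hU : U ∈ nhds 0)
    (hf : ContDiffOn ℝ 3 f U)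
    (hf0 : f 0 = 0) (hDf0 : fderiv ℝ f 0 = 0)
    (hD2f : ∀ (s t : ℝ) (a b : EuclideanSpace ℝ (Fin (n - 2))),
      iteratedFDeriv ℝ 2 f 0 ![(s, a), (t, b)] = s * t + ⟪a, b⟫)
    (r : ℝ) (hr : 0 < r)
    (g : EuclideanSpace ℝ (Fin (n - 2)) → ℝ)
    (V : Set (EuclideanSpace ℝ (Fin (n - 2)))) (hV : V ∈ nhds 0)
    (hg : ContDiffOn ℝ 2 g V) (hg0 : g 0 = 0)
    (hshadow : ∀ y ∈ V,
      fderiv ℝ f (g y, y) ((1 : ℝ), (0 : EuclideanSpace ℝ (Fin (n - 2)))) * (g y - r)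
        + fderiv ℝ f (g y, y) ((0 : ℝ), y) - f (g y, y) = 0) :
    fderiv ℝ g 0 = 0 ∧
    (∀ a b : EuclideanSpace ℝ (Fin (n - 2)),
      iteratedFDeriv ℝ 2 g 0 ![a, b] =
        -(iteratedFDeriv ℝ 2
            (fun z => fderiv ℝ f z ((1 : ℝ), (0 : EuclideanSpace ℝ (Fin (n - 2))))) 0
            ![((0 : ℝ), a), ((0 : ℝ), b)])
          + r⁻¹ * ⟪a, b⟫) :=
  shadow_aux f U hU hf hDf0 hD2f r hr g V hV hg hg0 hshadow
end

section
/- Let n ≥ 3 and let f : U → ℝ be of class C³ on a neighborhood U of 0 in ℝ^{n−1}, with f(0) = 0, Df(0) = 0 and D²f(0)[a,b] = ⟨a,b⟩. Let r > 0 and m ∈ ℝ, and suppose g : V → ℝ is a C² function on a neighborhood V of 0 in ℝ^{n−2} with g(0) = 0 which simultaneously satisfies the shadow-boundary equation (∂₁f)(g(y),y)·(g(y) − r) + (Df)(g(y),y)[y] − f(g(y),y) = 0 and the section equation −g(y) + m·f(g(y),y) = 0 for all y ∈ V (i.e., the shadow boundary created by the light source r·e₁ is flat, lying in the hyperplane with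 normal −e₁ + m·e_n). Then D²(∂₁f)(0)[a,b] = (−m + r^{-1})⟨a,b⟩ for all a, b ∈ ℝ^{n−2}, where D²(∂₁f)(0) is the second derivative of ∂₁f in the y-variables at 0. -/
open scoped RealInnerProductSpace
open Filter ContinuousLinearMap
set_option maxHeartbeats 1000000

private abbrev Ysp (n : ℕ) : Type := EuclideanSpace ℝ (Fin (n - 2))
private abbrev Esp (n : ℕ) : Type := ℝ × Ysp n

/-- if the shadow boundary of the graph `xₙ = f(x₁, y)` created
by the point light source `r·e₁` is flat, lying in the hyperplane with normal
`−e₁ + m·eₙ` (i.e. the parametrization `g` of its projection satisfies both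
the shadow-boundary equation and the section equation), then
`D²(∂₁f)(0)[a,b] = (−m + r⁻¹)⟨a,b⟩` for all `a, b`. -/
theorem flat_shadow_boundary_second_order_constraint
    (n : ℕ) (hn : 3 ≤ n)
    (f : ℝ × EuclideanSpace ℝ (Fin (n - 2)) → ℝ)
    (U : Set (ℝ × EuclideanSpace ℝ (Fin (n - 2)))) (hU : U ∈ nhds 0)
    (hf : ContDiffOn ℝ 3 f U)
    (hf0 : f 0 = 0) (hDf0 : fderiv ℝ f 0 = 0)
    (hD2f : ∀ (s t : ℝ) (a b : EuclideanSpace ℝ (Fin (n - 2))),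
      iteratedFDeriv ℝ 2 f 0 ![(s, a), (t, b)] = s * t + ⟪a, b⟫)
    (r : ℝ) (hr : 0 < r) (m : ℝ)
    (g : EuclideanSpace ℝ (Fin (n - 2)) → ℝ)
    (V : Set (EuclideanSpace ℝ (Fin (n - 2)))) (hV : V ∈ nhds 0)
    (hg : ContDiffOn ℝ 2 g V) (hg0 : g 0 = 0)
    (hshadow : ∀ y ∈ V,
      fderiv ℝ f (g y, y) ((1 : ℝ), (0 : EuclideanSpace ℝ (Fin (n - 2)))) * (g y - r)
        + fderiv ℝ f (g y, y) ((0 : ℝ), y) - f (g y, y) = 0)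
    (hsec : ∀ y ∈ V, -g y + m * f (g y, y) = 0) :
    ∀ a b : EuclideanSpace ℝ (Fin (n - 2)),
      iteratedFDeriv ℝ 2
          (fun z => fderiv ℝ f z ((1 : ℝ), (0 : EuclideanSpace ℝ (Fin (n - 2))))) 0
          ![((0 : ℝ), a), ((0 : ℝ), b)] =
        (-m + r⁻¹) * ⟪a, b⟫ := by
  intro a b
  -- basic smoothness at 0
  have hf3 : ContDiffAt ℝ 3 f 0 := hf.contDiffAt hU
  have hg2 : ContDiffAt ℝ 2 g 0 := hg.contDiffAt hV
  have hfev : ∀ᶠ z in nhds (0 : (Esp n)), ContDiffAt ℝ 3 f z := hf3.eventually (by norm_num)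
  have hgev : ∀ᶠ y in nhds (0 : (Ysp n)), ContDiffAt ℝ 2 g y := hg2.eventually (by norm_num)
  have hpt : ((g 0 : ℝ), (0 : (Ysp n))) = (0 : (Esp n)) := by
    rw [hg0]; exact Prod.mk_zero_zero
  -- tendsto of y ↦ (g y, y)
  have hGt : Tendsto (fun y : (Ysp n) => ((g y : ℝ), y)) (nhds 0)
      (nhds ((g 0 : ℝ), (0 : Ysp n))) := hg2.continuousAt.prodMk continuousAt_id
  rw [hpt] at hGt
  have hfevG : ∀ᶠ y in nhds (0 : (Ysp n)), ContDiffAt ℝ 3 f ((g y : ℝ), y) := hGt.eventually hfev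
  have hVmem : ∀ᶠ y in nhds (0 : (Ysp n)), y ∈ V := hV
  -- eventual equations
  have hsecE : ∀ᶠ y in nhds (0 : (Ysp n)), g y = m * f ((g y : ℝ), y) := by
    filter_upwards [hVmem] with y hy
    have := hsec y hy; linarith
  have hshE : ∀ᶠ y in nhds (0 : (Ysp n)),
      fderiv ℝ f ((g y : ℝ), y) ((1 : ℝ), (0 : (Ysp n))) * (g y - r)
        + fderiv ℝ f ((g y : ℝ), y) ((0 : ℝ), y) - f ((g y : ℝ), y) = 0 := by
    filter_upwards [hVmem] with y hy using hshadow y hy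
  -- eventual derivative formula for g
  have hgder : ∀ᶠ y in nhds (0 : (Ysp n)),
      fderiv ℝ g y = m • ((fderiv ℝ f ((g y : ℝ), y)).comp
        ((fderiv ℝ g y).prod (ContinuousLinearMap.id ℝ (Ysp n)))) := by
    filter_upwards [hgev, hfevG, hsecE.eventually_nhds] with y hgy hfy hsy
    have hgd : HasFDerivAt g (fderiv ℝ g y) y :=
      (hgy.differentiableAt (by norm_num)).hasFDerivAt
    have hGd : HasFDerivAt (fun y' : (Ysp n) => ((g y' : ℝ), y'))
        ((fderiv ℝ g y).prod (ContinuousLinearMap.id ℝ (Ysp n))) y := hgd.prodMk (hasFDerivAt_id y)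
    have hfd : HasFDerivAt f (fderiv ℝ f ((g y : ℝ), y)) ((g y : ℝ), y) :=
      (hfy.differentiableAt (by norm_num)).hasFDerivAt
    have hR : HasFDerivAt (fun y' : (Ysp n) => m * f ((g y' : ℝ), y'))
        (m • ((fderiv ℝ f ((g y : ℝ), y)).comp
          ((fderiv ℝ g y).prod (ContinuousLinearMap.id ℝ (Ysp n))))) y :=
      (HasFDerivAt.comp (f := fun y' : Ysp n => ((g y' : ℝ), y')) (x := y) (hg := hfd) (hf := hGd)).const_mul m
    exact hgd.unique (hR.congr_of_eventuallyEq hsy)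
  -- first derivative of g at 0 vanishes
  have hg'0 : fderiv ℝ g 0 = 0 := by
    have h0 := hgder.self_of_nhds
    rw [h0, hpt, hDf0]
    simp
  have hgd0 : HasFDerivAt g (0 : (Ysp n) →L[ℝ] ℝ) 0 := by
    have := (hg2.differentiableAt (by norm_num)).hasFDerivAt
    rwa [hg'0] at this
  have hGd0 : HasFDerivAt (fun y' : (Ysp n) => ((g y' : ℝ), y'))
      ((0 : (Ysp n) →L[ℝ] ℝ).prod (ContinuousLinearMap.id ℝ (Ysp n))) 0 := hgd0.prodMk (hasFDerivAt_id 0)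
  -- f-side derivatives at 0
  have hf'cd : ContDiffAt ℝ 2 (fderiv ℝ f) 0 := hf3.fderiv_right (by norm_num)
  have hf'd0 : HasFDerivAt (fderiv ℝ f) (fderiv ℝ (fderiv ℝ f) 0) ((g 0 : ℝ), (0 : (Ysp n))) := by
    rw [hpt]; exact (hf'cd.differentiableAt (by norm_num)).hasFDerivAt
  have hf''cd : ContDiffAt ℝ 1 (fderiv ℝ (fderiv ℝ f)) 0 := hf'cd.fderiv_right (by norm_num)
  have hf''d0 : HasFDerivAt (fderiv ℝ (fderiv ℝ f))
      (fderiv ℝ (fderiv ℝ (fderiv ℝ f)) 0) ((g 0 : ℝ), (0 : (Ysp n))) := by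
    rw [hpt]; exact (hf''cd.differentiableAt (by norm_num)).hasFDerivAt
  have hf2ap : ∀ (s t : ℝ) (x c : (Ysp n)),
      fderiv ℝ (fderiv ℝ f) 0 (s, x) (t, c) = s * t + ⟪x, c⟫ := by
    intro s t x c
    have h := hD2f s t x c
    rw [iteratedFDeriv_two_apply] at h
    simpa using h
  -- derivative of y ↦ fderiv f (g y, y) at 0
  have hcd0 : HasFDerivAt (fun y : (Ysp n) => fderiv ℝ f ((g y : ℝ), y))
      ((fderiv ℝ (fderiv ℝ f) 0).comp ((0 : (Ysp n) →L[ℝ] ℝ).prod (ContinuousLinearMap.id ℝ (Ysp n)))) 0 :=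
    HasFDerivAt.comp (f := fun y' : Ysp n => ((g y' : ℝ), y')) (x := 0) (hg := hf'd0) (hf := hGd0)
  have hc2d0 : HasFDerivAt (fun y : (Ysp n) => fderiv ℝ (fderiv ℝ f) ((g y : ℝ), y))
      ((fderiv ℝ (fderiv ℝ (fderiv ℝ f)) 0).comp
        ((0 : (Ysp n) →L[ℝ] ℝ).prod (ContinuousLinearMap.id ℝ (Ysp n)))) 0 :=
    HasFDerivAt.comp (G := Esp n →L[ℝ] Esp n →L[ℝ] ℝ) (f := fun y' : Ysp n => ((g y' : ℝ), y')) (x := 0) (hg := hf''d0) (hf := hGd0)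
  -- second derivative of g at 0
  have hg'cd : ContDiffAt ℝ 1 (fderiv ℝ g) 0 := hg2.fderiv_right (by norm_num)
  have hg'd0 : HasFDerivAt (fderiv ℝ g) (fderiv ℝ (fderiv ℝ g) 0) 0 :=
    (hg'cd.differentiableAt (by norm_num)).hasFDerivAt
  have hQ : ∀ c : (Ysp n), HasFDerivAt (fun y : (Ysp n) => fderiv ℝ g y c)
      ((ContinuousLinearMap.apply ℝ ℝ c).comp (fderiv ℝ (fderiv ℝ g) 0)) 0 :=
    fun c => HasFDerivAt.comp (f := fderiv ℝ g) (x := 0) (hg := (ContinuousLinearMap.apply ℝ ℝ c).hasFDerivAt) (hf := hg'd0)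
  have hg'' : ∀ x c : (Ysp n), fderiv ℝ (fderiv ℝ g) 0 x c = m * ⟪x, c⟫ := by
    intro x c
    have hev : (fun y : (Ysp n) => fderiv ℝ g y c) =ᶠ[nhds 0]
        (fun y : (Ysp n) => m * fderiv ℝ f ((g y : ℝ), y) ((fderiv ℝ g y c : ℝ), c)) := by
      filter_upwards [hgder] with y hy
      conv_lhs => rw [hy]
      simp
    have hu : HasFDerivAt (fun y : (Ysp n) => ((fderiv ℝ g y c : ℝ), c))
        (((ContinuousLinearMap.apply ℝ ℝ c).comp (fderiv ℝ (fderiv ℝ g) 0)).prod 0) 0 :=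
      (hQ c).prodMk (hasFDerivAt_const c 0)
    have hR := (hcd0.clm_apply hu).const_mul m
    have huniq := (hQ c).unique (hR.congr_of_eventuallyEq hev)
    have happ := congrArg (fun L : (Ysp n) →L[ℝ] ℝ => L x) huniq
    simp only [ContinuousLinearMap.comp_apply, ContinuousLinearMap.apply_apply,
      ContinuousLinearMap.smul_apply, ContinuousLinearMap.add_apply,
      ContinuousLinearMap.flip_apply, ContinuousLinearMap.prod_apply,
      ContinuousLinearMap.zero_apply, ContinuousLinearMap.coe_id', id_eq,
      smul_eq_mul, hpt, hDf0, hg'0] at happ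
    rw [happ, hf2ap]
    ring
  -- eventual vanishing of the derivative of the shadow equation
  have hLam : ∀ᶠ y in nhds (0 : (Ysp n)),
      ((fderiv ℝ f ((g y : ℝ), y) ((1 : ℝ), (0 : (Ysp n)))) • fderiv ℝ g y
        + (g y - r) • ((fderiv ℝ f ((g y : ℝ), y)).comp (0 : (Ysp n) →L[ℝ] (Esp n))
          + ((fderiv ℝ (fderiv ℝ f) ((g y : ℝ), y)).comp
              ((fderiv ℝ g y).prod (ContinuousLinearMap.id ℝ (Ysp n)))).flip ((1 : ℝ), (0 : (Ysp n)))))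
      + ((fderiv ℝ f ((g y : ℝ), y)).comp ((0 : (Ysp n) →L[ℝ] ℝ).prod (ContinuousLinearMap.id ℝ (Ysp n)))
        + ((fderiv ℝ (fderiv ℝ f) ((g y : ℝ), y)).comp
            ((fderiv ℝ g y).prod (ContinuousLinearMap.id ℝ (Ysp n)))).flip ((0 : ℝ), y))
      - (fderiv ℝ f ((g y : ℝ), y)).comp ((fderiv ℝ g y).prod (ContinuousLinearMap.id ℝ (Ysp n)))
      = 0 := by
    filter_upwards [hgev, hfevG, hshE.eventually_nhds] with y hgy hfy hsy
    have hgd : HasFDerivAt g (fderiv ℝ g y) y :=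
      (hgy.differentiableAt (by norm_num)).hasFDerivAt
    have hGd : HasFDerivAt (fun y' : (Ysp n) => ((g y' : ℝ), y'))
        ((fderiv ℝ g y).prod (ContinuousLinearMap.id ℝ (Ysp n))) y := hgd.prodMk (hasFDerivAt_id y)
    have hfd : HasFDerivAt f (fderiv ℝ f ((g y : ℝ), y)) ((g y : ℝ), y) :=
      (hfy.differentiableAt (by norm_num)).hasFDerivAt
    have hf'd : HasFDerivAt (fderiv ℝ f) (fderiv ℝ (fderiv ℝ f) ((g y : ℝ), y)) ((g y : ℝ), y) :=
      ((hfy.fderiv_right (m := 2) (by norm_num)).differentiableAt (by norm_num)).hasFDerivAt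
    have hcd : HasFDerivAt (fun y' : (Ysp n) => fderiv ℝ f ((g y' : ℝ), y'))
        ((fderiv ℝ (fderiv ℝ f) ((g y : ℝ), y)).comp
          ((fderiv ℝ g y).prod (ContinuousLinearMap.id ℝ (Ysp n)))) y :=
      HasFDerivAt.comp (f := fun y' : Ysp n => ((g y' : ℝ), y')) (x := y) (hg := hf'd) (hf := hGd)
    have hA := hcd.clm_apply (hasFDerivAt_const ((1 : ℝ), (0 : (Ysp n))) y)
    have hB := hgd.sub_const r
    have hK := hcd.clm_apply ((hasFDerivAt_const (0 : ℝ) y).prodMk (hasFDerivAt_id y))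
    have hPhi : HasFDerivAt (fun y' : Ysp n => f ((g y' : ℝ), y'))
        ((fderiv ℝ f ((g y : ℝ), y)).comp
          ((fderiv ℝ g y).prod (ContinuousLinearMap.id ℝ (Ysp n)))) y :=
      HasFDerivAt.comp (f := fun y' : Ysp n => ((g y' : ℝ), y')) (x := y) (hg := hfd) (hf := hGd)
    have hPsi := ((hA.mul hB).add hK).sub hPhi
    have hsy' : (fun x : Ysp n =>
        fderiv ℝ f ((g x : ℝ), x) ((1 : ℝ), (0 : Ysp n)) * (g x - r)
          + fderiv ℝ f ((g x : ℝ), x) ((0 : ℝ), x) - f ((g x : ℝ), x))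
        =ᶠ[nhds y] (fun _ => (0 : ℝ)) := hsy
    have h0 : HasFDerivAt (fun _ : (Ysp n) => (0 : ℝ)) _ y :=
      hPsi.congr_of_eventuallyEq hsy'.symm
    have huniq := (hasFDerivAt_const (0 : ℝ) y).unique h0
    exact huniq.symm
  -- apply the vanishing derivative to the vector b, get scalar identity
  have hS0 : (fun y : (Ysp n) =>
        fderiv ℝ f ((g y : ℝ), y) ((1 : ℝ), (0 : (Ysp n))) * fderiv ℝ g y b
        + (g y - r) * (fderiv ℝ (fderiv ℝ f) ((g y : ℝ), y) ((fderiv ℝ g y b : ℝ), b)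
            ((1 : ℝ), (0 : (Ysp n))))
        + (fderiv ℝ f ((g y : ℝ), y) ((0 : ℝ), b)
          + fderiv ℝ (fderiv ℝ f) ((g y : ℝ), y) ((fderiv ℝ g y b : ℝ), b) ((0 : ℝ), y))
        - fderiv ℝ f ((g y : ℝ), y) ((fderiv ℝ g y b : ℝ), b))
      =ᶠ[nhds (0 : (Ysp n))] (fun _ => (0 : ℝ)) := by
    filter_upwards [hLam] with y hy
    have h2 := congrArg (fun L : (Ysp n) →L[ℝ] ℝ => L b) hy
    simp only [ContinuousLinearMap.add_apply, ContinuousLinearMap.sub_apply,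
      ContinuousLinearMap.smul_apply, ContinuousLinearMap.comp_apply,
      ContinuousLinearMap.flip_apply, ContinuousLinearMap.prod_apply,
      ContinuousLinearMap.zero_apply, ContinuousLinearMap.coe_id', id_eq,
      smul_eq_mul, map_zero, zero_add, add_zero, mul_zero, zero_mul] at h2
    linarith [h2]
  -- differentiate the scalar identity at 0
  have hu : HasFDerivAt (fun y : (Ysp n) => ((fderiv ℝ g y b : ℝ), b))
      (((ContinuousLinearMap.apply ℝ ℝ b).comp (fderiv ℝ (fderiv ℝ g) 0)).prod 0) 0 :=
    (hQ b).prodMk (hasFDerivAt_const b 0)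
  have hA0 := hcd0.clm_apply (hasFDerivAt_const ((1 : ℝ), (0 : (Ysp n))) 0)
  have hB0 := hgd0.sub_const r
  have hd := hc2d0.clm_apply hu
  have hw := hd.clm_apply (hasFDerivAt_const ((1 : ℝ), (0 : (Ysp n))) 0)
  have ht5 := hcd0.clm_apply (hasFDerivAt_const ((0 : ℝ), b) 0)
  have ht6 := hd.clm_apply ((hasFDerivAt_const (0 : ℝ) 0).prodMk (hasFDerivAt_id 0))
  have ht7 := hcd0.clm_apply hu
  have hS := (((hA0.mul (hQ b)).add (hB0.mul hw)).add (ht5.add ht6)).sub ht7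
  have hzero : HasFDerivAt (fun _ : (Ysp n) => (0 : ℝ)) _ 0 :=
    hS.congr_of_eventuallyEq hS0.symm
  have hDzero := (hasFDerivAt_const (0 : ℝ) 0).unique hzero
  have key := congrArg (fun L : (Ysp n) →L[ℝ] ℝ => L a) hDzero.symm
  simp only [ContinuousLinearMap.comp_apply, ContinuousLinearMap.apply_apply,
    ContinuousLinearMap.smul_apply, ContinuousLinearMap.add_apply,
    ContinuousLinearMap.sub_apply, ContinuousLinearMap.flip_apply,
    ContinuousLinearMap.prod_apply, ContinuousLinearMap.zero_apply,
    ContinuousLinearMap.coe_id', id_eq, smul_eq_mul, hpt, hDf0, hg'0, hg0,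
    ContinuousLinearMap.map_zero] at key
  rw [hg'' a b] at key
  simp only [Prod.mk_zero_zero, hDf0, ContinuousLinearMap.zero_apply, map_zero, hf2ap,
    zero_mul, mul_zero, zero_add, add_zero, mul_one, one_mul, inner_zero_left, Prod.fst_zero, Prod.snd_zero,
    inner_zero_right, sub_zero, zero_sub] at key
  -- now extract the value of the third derivative
  rw [iteratedFDeriv_two_apply]
  simp only [Matrix.cons_val_zero, Matrix.cons_val_one, Matrix.head_cons]
  have hF1ev : (fun z : (Esp n) => fderiv ℝ (fun z' : (Esp n) => fderiv ℝ f z' ((1 : ℝ), (0 : (Ysp n)))) z)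
      =ᶠ[nhds (0 : (Esp n))]
      (fun z : (Esp n) => (ContinuousLinearMap.apply ℝ ℝ ((1 : ℝ), (0 : (Ysp n)))).comp
        (fderiv ℝ (fderiv ℝ f) z)) := by
    filter_upwards [hfev] with z hz
    have h1 : HasFDerivAt (fun z' : (Esp n) => fderiv ℝ f z' ((1 : ℝ), (0 : (Ysp n))))
        ((ContinuousLinearMap.apply ℝ ℝ ((1 : ℝ), (0 : (Ysp n)))).comp
          (fderiv ℝ (fderiv ℝ f) z)) z :=
      HasFDerivAt.comp (f := fderiv ℝ f) (x := z)
        (hg := (ContinuousLinearMap.apply ℝ ℝ ((1 : ℝ), (0 : (Ysp n)))).hasFDerivAt)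
        (hf := (((hz.fderiv_right (m := 2) (by norm_num)).differentiableAt
          (by norm_num)).hasFDerivAt))
    exact h1.fderiv
  rw [hF1ev.fderiv_eq]
  have hf''at0 : HasFDerivAt (fderiv ℝ (fderiv ℝ f))
      (fderiv ℝ (fderiv ℝ (fderiv ℝ f)) 0) 0 := by
    have := hf''d0; rwa [hpt] at this
  have hM := (hasFDerivAt_const
      (ContinuousLinearMap.apply ℝ ℝ ((1 : ℝ), (0 : (Ysp n)))) (0 : (Esp n))).clm_comp hf''at0
  rw [hM.fderiv]
  simp only [ContinuousLinearMap.add_apply, ContinuousLinearMap.comp_apply,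
    ContinuousLinearMap.compL_apply, ContinuousLinearMap.flip_apply,
    ContinuousLinearMap.zero_apply, ContinuousLinearMap.apply_apply,
    ContinuousLinearMap.zero_comp, add_zero]
  -- key : the linear relation; finish with algebra
  have hrne : r ≠ 0 := ne_of_gt hr
  have hiba : (inner ℝ b a : ℝ) = inner ℝ a b := real_inner_comm a b
  rw [hiba] at key
  set t : ℝ := inner ℝ a b with htdef
  set X : ℝ := (((fderiv ℝ (fderiv ℝ (fderiv ℝ f)) 0) ((0:ℝ), a)) ((0:ℝ), b)) ((1:ℝ), (0 : Ysp n)) with hXdef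
  field_simp
  ring_nf
  ring_nf at key
  linarith
end

section
/- Let T be a symmetric trilinear form on ℝ^d with the standard inner product, and suppose that for i = 1, 2 there are vectors u_i, v_i ∈ ℝ^d and scalars λ_i ∈ ℝ with T(u_i, a, b) = λ_i⟨a,b⟩ + ⟨a,u_i⟩⟨b,v_i⟩ + ⟨a,v_i⟩⟨b,u_i⟩ for all a, b ∈ ℝ^d. Then ⟨u₁,u₂⟩·(v₁ − v₂) = (λ₂ − ⟨u₂,v₁⟩)·u₁ − (λ₁ − ⟨u₁,v₂⟩)·u₂. In particular, if ⟨u₁,u₂⟩ = 0 and u₁, u₂ are linearly independent, then ⟨u₂,v₁⟩ = λ₂ and ⟨u₁,v₂⟩ = λ₁. -/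
open scoped RealInnerProductSpace

/-- compatibility of two flat-shadow relations for a symmetric
trilinear form `T` on `ℝᵈ`: if `T(uᵢ,a,b) = λᵢ⟨a,b⟩ + ⟨a,uᵢ⟩⟨b,vᵢ⟩ + ⟨a,vᵢ⟩⟨b,uᵢ⟩`
for `i = 1, 2`, then
`⟨u₁,u₂⟩·(v₁ − v₂) = (λ₂ − ⟨u₂,v₁⟩)·u₁ − (λ₁ − ⟨u₁,v₂⟩)·u₂`; in particular if
`⟨u₁,u₂⟩ = 0` and `u₁, u₂` are linearly independent then `⟨u₂,v₁⟩ = λ₂` and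
`⟨u₁,v₂⟩ = λ₁`. -/
theorem flat_shadow_relation_compatibility
    (d : ℕ)
    (T : EuclideanSpace ℝ (Fin d) →ₗ[ℝ] EuclideanSpace ℝ (Fin d) →ₗ[ℝ]
      EuclideanSpace ℝ (Fin d) →ₗ[ℝ] ℝ)
    (hT1 : ∀ a b c, T a b c = T b a c) (hT2 : ∀ a b c, T a b c = T a c b)
    (u₁ u₂ v₁ v₂ : EuclideanSpace ℝ (Fin d)) (lam₁ lam₂ : ℝ)
    (h₁ : ∀ a b, T u₁ a b = lam₁ * ⟪a, b⟫ + ⟪a, u₁⟫ * ⟪b, v₁⟫ + ⟪a, v₁⟫ * ⟪b, u₁⟫)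
    (h₂ : ∀ a b, T u₂ a b = lam₂ * ⟪a, b⟫ + ⟪a, u₂⟫ * ⟪b, v₂⟫ + ⟪a, v₂⟫ * ⟪b, u₂⟫) :
    ⟪u₁, u₂⟫ • (v₁ - v₂) = (lam₂ - ⟪u₂, v₁⟫) • u₁ - (lam₁ - ⟪u₁, v₂⟫) • u₂ ∧
    (⟪u₁, u₂⟫ = 0 → LinearIndependent ℝ ![u₁, u₂] →
      ⟪u₂, v₁⟫ = lam₂ ∧ ⟪u₁, v₂⟫ = lam₁) := by
  have key : ∀ b, ⟪b, ⟪u₁, u₂⟫ • (v₁ - v₂) - ((lam₂ - ⟪u₂, v₁⟫) • u₁ - (lam₁ - ⟪u₁, v₂⟫) • u₂)⟫ = 0 := by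
    intro b
    have e : T u₁ u₂ b = T u₂ u₁ b := hT1 u₁ u₂ b
    rw [h₁ u₂ b, h₂ u₁ b] at e
    simp only [inner_sub_right, inner_smul_right, inner_sub_left, inner_smul_left]
    have s12 : ⟪u₁, u₂⟫ = ⟪u₂, u₁⟫ := real_inner_comm _ _
    have b1 : ⟪b, u₁⟫ = ⟪u₁, b⟫ := real_inner_comm _ _
    have b2 : ⟪b, u₂⟫ = ⟪u₂, b⟫ := real_inner_comm _ _
    have bv1 : ⟪b, v₁⟫ = ⟪v₁, b⟫ := real_inner_comm _ _
    have bv2 : ⟪b, v₂⟫ = ⟪v₂, b⟫ := real_inner_comm _ _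
    have uv1 : ⟪u₂, v₁⟫ = ⟪v₁, u₂⟫ := real_inner_comm _ _
    have uv2 : ⟪u₁, v₂⟫ = ⟪v₂, u₁⟫ := real_inner_comm _ _
    rw [← s12, ← b1, ← b2] at e
    linarith
  have hz : ⟪u₁, u₂⟫ • (v₁ - v₂) - ((lam₂ - ⟪u₂, v₁⟫) • u₁ - (lam₁ - ⟪u₁, v₂⟫) • u₂) = 0 := by
    have := key (⟪u₁, u₂⟫ • (v₁ - v₂) - ((lam₂ - ⟪u₂, v₁⟫) • u₁ - (lam₁ - ⟪u₁, v₂⟫) • u₂))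
    exact inner_self_eq_zero.mp this
  have main : ⟪u₁, u₂⟫ • (v₁ - v₂) = (lam₂ - ⟪u₂, v₁⟫) • u₁ - (lam₁ - ⟪u₁, v₂⟫) • u₂ :=
    sub_eq_zero.mp hz
  refine ⟨main, fun h0 hli => ?_⟩
  rw [h0, zero_smul] at main
  have : (lam₂ - ⟪u₂, v₁⟫) • u₁ + (-(lam₁ - ⟪u₁, v₂⟫)) • u₂ = 0 := by
    rw [neg_smul, ← sub_eq_add_neg, ← main]
  obtain ⟨hs, ht⟩ := hli.eq_zero_of_pair this
  constructor <;> linarith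
end

section
/- Let n ≥ 4 and let u₁, …, u_{n+1} ∈ ℝ^{n−1} be vectors in general linear position (any n−1 of them are linearly independent) which are pairwise non-orthogonal, i.e., ⟨u_i,u_j⟩ ≠ 0 for all i ≠ j. Let T be a symmetric trilinear form on ℝ^{n−1} and suppose there exist scalars λ_i ∈ ℝ and vectors v_i ∈ ℝ^{n−1} such that T(u_i, a, b) = λ_i⟨a,b⟩ + ⟨a,u_i⟩⟨b,v_i⟩ + ⟨a,v_i⟩⟨b,u_i⟩ for all a, b ∈ ℝ^{n−1} and all i = 1, …, n+1. Then there exists η ∈ ℝ^{n−1} such that T(a,b,c) = ⟨a,b⟩⟨c,η⟩ + ⟨b,c⟩⟨a,η⟩ + ⟨c,a⟩⟨b,η⟩ for all a, b, c ∈ ℝ^{n−1} (equivalently, after the linear change of coordinates adding the cubic −½⟨x,x⟩⟨x,η⟩, the third-order jet vanishes). -/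
open scoped RealInnerProductSpace

set_option maxHeartbeats 1000000 in
/-- let `n ≥ 4` and let `u₁, …, u_{n+1} ∈ ℝ^{n-1}` be in general
linear position (any `n-1` of them linearly independent) and pairwise
non-orthogonal.  If a symmetric trilinear form `T` satisfies the flat-shadow
relation `T(uᵢ,a,b) = λᵢ⟨a,b⟩ + ⟨a,uᵢ⟩⟨b,vᵢ⟩ + ⟨a,vᵢ⟩⟨b,uᵢ⟩` for every `i`,
then `T(a,b,c) = ⟨a,b⟩⟨c,η⟩ + ⟨b,c⟩⟨a,η⟩ + ⟨c,a⟩⟨b,η⟩` for some `η`. -/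
theorem flat_shadow_relations_nonorthogonal_imply_trivial_cubic
    (n : ℕ) (hn : 4 ≤ n)
    (u : Fin (n + 1) → EuclideanSpace ℝ (Fin (n - 1)))
    (hgen : ∀ s : Finset (Fin (n + 1)), s.card = n - 1 →
      LinearIndependent ℝ (fun i : s => u i.1))
    (horth : ∀ i j, i ≠ j → ⟪u i, u j⟫ ≠ 0)
    (T : EuclideanSpace ℝ (Fin (n - 1)) →ₗ[ℝ] EuclideanSpace ℝ (Fin (n - 1)) →ₗ[ℝ]
      EuclideanSpace ℝ (Fin (n - 1)) →ₗ[ℝ] ℝ)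
    (hT1 : ∀ a b c, T a b c = T b a c) (hT2 : ∀ a b c, T a b c = T a c b)
    (lam : Fin (n + 1) → ℝ) (v : Fin (n + 1) → EuclideanSpace ℝ (Fin (n - 1)))
    (hrel : ∀ i a b, T (u i) a b =
      lam i * ⟪a, b⟫ + ⟪a, u i⟫ * ⟪b, v i⟫ + ⟪a, v i⟫ * ⟪b, u i⟫) :
    ∃ η : EuclideanSpace ℝ (Fin (n - 1)),
      ∀ a b c, T a b c = ⟪a, b⟫ * ⟪c, η⟫ + ⟪b, c⟫ * ⟪a, η⟫ + ⟪c, a⟫ * ⟪b, η⟫ := by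
  classical
  -- Any subfamily of size ≤ n - 1 is linearly independent.
  have hli : ∀ s : Finset (Fin (n + 1)), s.card ≤ n - 1 →
      LinearIndependent ℝ (fun i : s => u i.1) := by
    intro s hs
    have hcard : n - 1 ≤ Fintype.card (Fin (n + 1)) := by
      rw [Fintype.card_fin]; omega
    obtain ⟨t, hst, ht⟩ := Finset.exists_superset_card_eq hs hcard
    have h := (hgen t ht).comp (fun x : s => (⟨x.1, hst x.2⟩ : t))
      (fun x y h => Subtype.ext (by simpa using congrArg Subtype.val h))
    exact h
  -- Pairs of distinct `u`s are linearly independent.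
  have hpair : ∀ i j, i ≠ j → ∀ α β : ℝ, α • u i + β • u j = 0 → α = 0 ∧ β = 0 := by
    clear hrel hT1 hT2 T horth lam v hgen
    intro i j hij α β hzero
    have hcard : ({i, j} : Finset (Fin (n + 1))).card ≤ n - 1 := by
      rw [Finset.card_pair hij]; omega
    have h2 := hli {i, j} hcard
    have hmem_i : i ∈ ({i, j} : Finset (Fin (n + 1))) := by simp
    have hmem_j : j ∈ ({i, j} : Finset (Fin (n + 1))) := by simp
    have h3 := h2.comp (fun x : Fin 2 => if x = 0 then ⟨i, hmem_i⟩ else ⟨j, hmem_j⟩)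
      (by intro x y h; fin_cases x <;> fin_cases y <;> simp_all)
    have h4 : LinearIndependent ℝ ![u i, u j] := by
      convert h3 using 1
      funext x; fin_cases x <;> simp
    exact LinearIndependent.pair_iff.mp h4 α β hzero
  -- Triples of distinct `u`s are linearly independent.
  have htriple : ∀ i j k, i ≠ j → i ≠ k → j ≠ k → ∀ α β γ : ℝ,
      α • u i + β • u j + γ • u k = 0 → α = 0 ∧ β = 0 ∧ γ = 0 := by
    clear hrel hT1 hT2 T horth lam v hgen hpair
    intro i j k hij hik hjk α β γ hzero
    have hcard : ({i, j, k} : Finset (Fin (n + 1))).card ≤ n - 1 := by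
      have h1 := Finset.card_insert_le i ({j, k} : Finset (Fin (n + 1)))
      have h2 := Finset.card_insert_le j ({k} : Finset (Fin (n + 1)))
      simp only [Finset.card_singleton] at h2
      omega
    have h2 := hli {i, j, k} hcard
    have hmem_i : i ∈ ({i, j, k} : Finset (Fin (n + 1))) := by simp
    have hmem_j : j ∈ ({i, j, k} : Finset (Fin (n + 1))) := by simp
    have hmem_k : k ∈ ({i, j, k} : Finset (Fin (n + 1))) := by simp
    have h3 := h2.comp (fun x : Fin 3 =>
        if x = 0 then ⟨i, hmem_i⟩ else if x = 1 then ⟨j, hmem_j⟩ else ⟨k, hmem_k⟩)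
      (by intro x y h; fin_cases x <;> fin_cases y <;> simp_all)
    have h4 : LinearIndependent ℝ ![u i, u j, u k] := by
      convert h3 using 1
      funext x; fin_cases x <;> simp
    have h5 := Fintype.linearIndependent_iff.mp h4 ![α, β, γ]
      (by rw [Fin.sum_univ_three]; simpa using hzero)
    exact ⟨h5 0, h5 1, h5 2⟩
  -- The basic vector identity obtained from the symmetry of T in the first two slots.
  have hvec : ∀ i j, i ≠ j →
      (⟪u i, u j⟫) • (v i - v j) =
        (lam j - ⟪u j, v i⟫) • u i + (⟪u i, v j⟫ - lam i) • u j := by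
    intro i j hij
    apply ext_inner_right ℝ
    intro b
    have h1 := hrel i (u j) b
    have h2 := hrel j (u i) b
    have h3 := hT1 (u i) (u j) b
    rw [real_inner_comm (v i) b, real_inner_comm (u i) b, real_inner_comm (u i) (u j)] at h1
    rw [real_inner_comm (v j) b, real_inner_comm (u j) b] at h2
    simp only [inner_sub_left, inner_add_left, real_inner_smul_left]
    linarith
  -- The coefficients of `v i - v j` in the basis `u i, u j`.
  set p : Fin (n + 1) → Fin (n + 1) → ℝ :=
    fun i j => (lam j - ⟪u j, v i⟫) / ⟪u i, u j⟫ with hp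
  have hdiff : ∀ i j, i ≠ j → v i - v j = p i j • u i - p j i • u j := by
    intro i j hij
    have hc := horth i j hij
    have key := hvec i j hij
    have h0 : v i - v j = (⟪u i, u j⟫)⁻¹ • ((⟪u i, u j⟫) • (v i - v j)) := by
      rw [smul_smul, inv_mul_cancel₀ hc, one_smul]
    rw [h0, key, smul_add, smul_smul, smul_smul]
    have e1 : ⟪u i, u j⟫⁻¹ * (lam j - ⟪u j, v i⟫) = p i j := by
      rw [hp]; simp only []; rw [div_eq_inv_mul]
    have e2 : ⟪u i, u j⟫⁻¹ * (⟪u i, v j⟫ - lam i) = -(p j i) := by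
      rw [hp]; simp only []
      rw [real_inner_comm (u i) (u j)]
      field_simp
      ring
    rw [e1, e2, sub_eq_add_neg, ← neg_smul]
  -- `p i j` does not depend on `j`.
  have hps : ∀ i j k, i ≠ j → i ≠ k → j ≠ k → p i j = p i k := by
    intro i j k hij hik hjk
    have d1 := hdiff i j hij
    have d2 := hdiff j k hjk
    have d3 := hdiff k i (Ne.symm hik)
    have hsum : (p i j - p i k) • u i + (p j k - p j i) • u j + (p k i - p k j) • u k = 0 := by
      have hz : (v i - v j) + (v j - v k) + (v k - v i) = 0 := by abel
      rw [d1, d2, d3] at hz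
      have e : (p i j - p i k) • u i + (p j k - p j i) • u j + (p k i - p k j) • u k
          = (p i j • u i - p j i • u j) + (p j k • u j - p k j • u k)
            + (p k i • u k - p i k • u i) := by module
      rw [e, hz]
    exact sub_eq_zero.mp (htriple i j k hij hik hjk _ _ _ hsum).1
  -- Extract the common part `w` of the `v i`.
  set iz : Fin (n + 1) := ⟨0, by omega⟩ with hiz
  set io : Fin (n + 1) := ⟨1, by omega⟩ with hio
  have hzo : iz ≠ io := by simp [hiz, hio, Fin.ext_iff]
  set pick : Fin (n + 1) → Fin (n + 1) := fun i => if i = iz then io else iz with hpickdef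
  have hpick : ∀ i, pick i ≠ i := by
    intro i
    rw [hpickdef]
    by_cases h : i = iz
    · simp [h]; exact Ne.symm (by simpa [h] using hzo)
    · simp [h]; exact fun hh => h hh.symm
  set a : Fin (n + 1) → ℝ := fun i => p i (pick i) with ha
  have hap : ∀ i j, i ≠ j → p i j = a i := by
    intro i j hij
    rw [ha]
    by_cases hj : j = pick i
    · rw [hj]
    · exact hps i j (pick i) hij (Ne.symm (hpick i)) hj
  set w : EuclideanSpace ℝ (Fin (n - 1)) := v iz - a iz • u iz with hw
  have hvw : ∀ i, v i = a i • u i + w := by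
    intro i
    by_cases hi : i = iz
    · rw [hi, hw]; abel
    · have d := hdiff i iz hi
      rw [hap i iz hi, hap iz i (Ne.symm hi)] at d
      have hri : v i = (v i - v iz) + v iz := by abel
      rw [hri, d, hw]; abel
  -- The mu-relation.
  have hmu : ∀ i j : Fin (n + 1), i ≠ j → lam j - ⟪u j, w⟫ = 2 * a i * ⟪u i, u j⟫ := by
    intro i j hij
    have key := hvec i j hij
    have e1 : ⟪u j, v i⟫ = a i * ⟪u i, u j⟫ + ⟪u j, w⟫ := by
      rw [hvw i, inner_add_right, real_inner_smul_right, real_inner_comm (u i) (u j)]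
    have e2 : ⟪u i, v j⟫ = a j * ⟪u i, u j⟫ + ⟪u i, w⟫ := by
      rw [hvw j, inner_add_right, real_inner_smul_right]
    have e3 : v i - v j = a i • u i - a j • u j := by
      rw [hvw i, hvw j]; abel
    rw [e1, e2, e3] at key
    have hz : (2 * a i * ⟪u i, u j⟫ + ⟪u j, w⟫ - lam j) • u i
        + (lam i - ⟪u i, w⟫ - 2 * a j * ⟪u i, u j⟫) • u j = 0 := by
      have e : (2 * a i * ⟪u i, u j⟫ + ⟪u j, w⟫ - lam j) • u i
          + (lam i - ⟪u i, w⟫ - 2 * a j * ⟪u i, u j⟫) • u j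
          = ⟪u i, u j⟫ • (a i • u i - a j • u j)
            - ((lam j - (a i * ⟪u i, u j⟫ + ⟪u j, w⟫)) • u i
              + ((a j * ⟪u i, u j⟫ + ⟪u i, w⟫) - lam i) • u j) := by module
      rw [e, key, sub_self]
    have := (hpair i j hij _ _ hz).1
    linarith
  -- All the coefficients `a i` vanish.
  have haz : ∀ i, a i = 0 := by
    intro i0
    obtain ⟨i1, hi1⟩ : ∃ i1 : Fin (n + 1), i1 ≠ i0 := by
      by_cases h : i0 = ⟨0, by omega⟩
      · exact ⟨⟨1, by omega⟩, by simp [h, Fin.ext_iff]⟩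
      · exact ⟨⟨0, by omega⟩, fun hh => h hh.symm⟩
    set z := a i0 • u i0 - a i1 • u i1 with hz
    set s : Finset (Fin (n + 1)) := Finset.univ \ {i0, i1} with hs
    have hcard : s.card = n - 1 := by
      rw [hs, Finset.card_sdiff_of_subset (by simp)]
      rw [Finset.card_pair (Ne.symm hi1)]
      simp only [Finset.card_univ, Fintype.card_fin]
      omega
    have hlis := hgen s hcard
    have hnonempty : Nonempty s := by
      rw [Finset.nonempty_coe_sort]
      apply Finset.card_pos.mp
      omega
    have hspan : Submodule.span ℝ (Set.range (fun j : s => u j.1)) = ⊤ :=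
      hlis.span_eq_top_of_card_eq_finrank
        (by rw [Fintype.card_coe, hcard, finrank_euclideanSpace_fin])
    have horthz : ∀ j : Fin (n + 1), j ≠ i0 → j ≠ i1 → ⟪z, u j⟫ = 0 := by
      intro j hj0 hj1
      have m0 := hmu i0 j (Ne.symm hj0)
      have m1 := hmu i1 j (Ne.symm hj1)
      rw [hz]
      simp only [inner_sub_left, real_inner_smul_left]
      linarith
    have hzzero : z = 0 := by
      have hall : ∀ x : EuclideanSpace ℝ (Fin (n - 1)), ⟪x, z⟫ = 0 := by
        intro x
        have hx : x ∈ Submodule.span ℝ (Set.range (fun j : s => u j.1)) := by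
          rw [hspan]; trivial
        induction hx using Submodule.span_induction with
        | mem y hy =>
          obtain ⟨j, rfl⟩ := hy
          have hj : j.1 ∈ Finset.univ \ ({i0, i1} : Finset (Fin (n + 1))) := by
            rw [← hs]; exact j.2
          simp only [Finset.mem_sdiff, Finset.mem_univ, Finset.mem_insert,
            Finset.mem_singleton, true_and, not_or] at hj
          rw [real_inner_comm]
          exact horthz j.1 hj.1 hj.2
        | zero => simp
        | add x y hx hy ihx ihy => rw [inner_add_left, ihx, ihy]; ring
        | smul r x hx ih => rw [real_inner_smul_left, ih]; ring
      have := hall z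
      rwa [inner_self_eq_zero] at this
    have hfin : a i0 • u i0 + (-(a i1)) • u i1 = 0 := by
      rw [neg_smul, ← sub_eq_add_neg, ← hz, hzzero]
    exact (hpair i0 i1 (Ne.symm hi1) _ _ hfin).1
  -- Hence all `v i = w` and `lam i = ⟪u i, w⟫`.
  have hvw' : ∀ i, v i = w := by
    intro i
    rw [hvw i, haz i, zero_smul, zero_add]
  have hlam : ∀ i, lam i = ⟪u i, w⟫ := by
    intro i
    obtain ⟨j, hj⟩ : ∃ j : Fin (n + 1), j ≠ i := by
      by_cases h : i = ⟨0, by omega⟩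
      · exact ⟨⟨1, by omega⟩, by simp [h, Fin.ext_iff]⟩
      · exact ⟨⟨0, by omega⟩, fun hh => h hh.symm⟩
    have := hmu j i hj
    rw [haz j] at this
    linear_combination this
  have hbase : ∀ i b c, T (u i) b c
      = ⟪u i, b⟫ * ⟪c, w⟫ + ⟪b, c⟫ * ⟪u i, w⟫ + ⟪c, u i⟫ * ⟪b, w⟫ := by
    intro i b c
    rw [hrel i b c, hvw' i, hlam i, real_inner_comm (u i) b]
    ring
  -- Conclude by spanning.
  set s : Finset (Fin (n + 1)) := Finset.univ \ {iz, io} with hs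
  have hcard : s.card = n - 1 := by
    rw [hs, Finset.card_sdiff_of_subset (by simp), Finset.card_pair hzo]
    simp only [Finset.card_univ, Fintype.card_fin]
    omega
  have hlis := hgen s hcard
  have hnonempty : Nonempty s := by
    rw [Finset.nonempty_coe_sort]
    apply Finset.card_pos.mp
    omega
  have hspan : Submodule.span ℝ (Set.range (fun j : s => u j.1)) = ⊤ :=
    hlis.span_eq_top_of_card_eq_finrank
      (by rw [Fintype.card_coe, hcard, finrank_euclideanSpace_fin])
  refine ⟨w, ?_⟩
  intro x b c
  have hx : x ∈ Submodule.span ℝ (Set.range (fun j : s => u j.1)) := by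
    rw [hspan]; trivial
  induction hx using Submodule.span_induction with
  | mem y hy =>
    obtain ⟨j, rfl⟩ := hy
    exact hbase j.1 b c
  | zero => simp
  | add y z hy hz ihy ihz =>
    simp only [map_add, LinearMap.add_apply, inner_add_left, inner_add_right]
    rw [ihy, ihz]
    ring
  | smul r y hy ih =>
    simp only [map_smul, LinearMap.smul_apply, smul_eq_mul,
      real_inner_smul_left, real_inner_smul_right]
    rw [ih]
    ring
end

section
/- Let n ≥ 4 and let u₁, …, u_{n+1} ∈ ℝ^{n−1} be vectors in general linear position (any n−1 of them are linearly independent). Let T be a symmetric trilinear form on ℝ^{n−1}, and suppose there exist scalars λ_i ∈ ℝ and vectors v_i ∈ ℝ^{n−1} such that T(u_i, a, b) = λ_i⟨a,b⟩ + ⟨a,u_i⟩⟨b,v_i⟩ + ⟨a,v_i⟩⟨b,u_i⟩ for all a, b ∈ ℝ^{n−1} and all i. Suppose moreover that there exist a fixed vector w ∈ ℝ^{n−1} and scalars μ₁, …, μ_{n+1} with v_i = μ_i·u_i + w for every i. Then there exists η ∈ ℝ^{n−1} such that T(a,b,c) = ⟨a,b⟩⟨c,η⟩ + ⟨b,c⟩⟨a,η⟩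 + ⟨c,a⟩⟨b,η⟩ for all a, b, c ∈ ℝ^{n−1}. -/
open scoped RealInnerProductSpace

/-- let `n ≥ 4` and let `u₁, …, u_{n+1} ∈ ℝ^{n-1}` be in general
linear position (any `n-1` of them linearly independent).  If a symmetric
trilinear form `T` satisfies the flat-shadow relation
`T(uᵢ,a,b) = λᵢ⟨a,b⟩ + ⟨a,uᵢ⟩⟨b,vᵢ⟩ + ⟨a,vᵢ⟩⟨b,uᵢ⟩` for every `i`, and
moreover `vᵢ = μᵢ·uᵢ + w` for a fixed vector `w` and scalars `μᵢ`, then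
`T(a,b,c) = ⟨a,b⟩⟨c,η⟩ + ⟨b,c⟩⟨a,η⟩ + ⟨c,a⟩⟨b,η⟩` for some `η`. -/
theorem flat_shadow_relations_aligned_imply_trivial_cubic
    (n : ℕ) (hn : 4 ≤ n)
    (u : Fin (n + 1) → EuclideanSpace ℝ (Fin (n - 1)))
    (hgen : ∀ s : Finset (Fin (n + 1)), s.card = n - 1 →
      LinearIndependent ℝ (fun i : s => u i.1))
    (T : EuclideanSpace ℝ (Fin (n - 1)) →ₗ[ℝ] EuclideanSpace ℝ (Fin (n - 1)) →ₗ[ℝ]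
      EuclideanSpace ℝ (Fin (n - 1)) →ₗ[ℝ] ℝ)
    (hT1 : ∀ a b c, T a b c = T b a c) (hT2 : ∀ a b c, T a b c = T a c b)
    (lam : Fin (n + 1) → ℝ) (v : Fin (n + 1) → EuclideanSpace ℝ (Fin (n - 1)))
    (hrel : ∀ i a b, T (u i) a b =
      lam i * ⟪a, b⟫ + ⟪a, u i⟫ * ⟪b, v i⟫ + ⟪a, v i⟫ * ⟪b, u i⟫)
    (w : EuclideanSpace ℝ (Fin (n - 1))) (μ : Fin (n + 1) → ℝ)
    (hv : ∀ i, v i = μ i • u i + w) :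
    ∃ η : EuclideanSpace ℝ (Fin (n - 1)),
      ∀ a b c, T a b c = ⟪a, b⟫ * ⟪c, η⟫ + ⟪b, c⟫ * ⟪a, η⟫ + ⟪c, a⟫ * ⟪b, η⟫ := by
  classical
  -- any two distinct u's are linearly independent
  have hpair : ∀ i j : Fin (n + 1), i ≠ j → ∀ a b : ℝ,
      a • u i + b • u j = 0 → a = 0 ∧ b = 0 := by
    intro i j hij a b hab
    have hcard2 : ({i, j} : Finset (Fin (n + 1))).card = 2 := by
      rw [Finset.card_insert_of_notMem (by simpa using hij), Finset.card_singleton]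
    obtain ⟨s, hsub, -, hcard⟩ :=
      Finset.exists_subsuperset_card_eq (n := n - 1)
        (Finset.subset_univ ({i, j} : Finset (Fin (n + 1))))
        (by rw [hcard2]; omega) (by simp only [Finset.card_univ, Fintype.card_fin]; omega)
    have hli := hgen s hcard
    have hi : i ∈ s := hsub (by simp)
    have hj : j ∈ s := hsub (by simp)
    have hfinj : Function.Injective (![(⟨i, hi⟩ : s), ⟨j, hj⟩]) := by
      intro x y hxy
      fin_cases x <;> fin_cases y
      · rfl
      · exact absurd (Subtype.ext_iff.mp hxy) hij
      · exact absurd (Subtype.ext_iff.mp hxy).symm hij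
      · rfl
    have hli2 := hli.comp _ hfinj
    have heq : ((fun k : s => u k.1) ∘ ![(⟨i, hi⟩ : s), ⟨j, hj⟩]) = ![u i, u j] := by
      funext k; fin_cases k <;> rfl
    rw [heq] at hli2
    exact LinearIndependent.pair_iff.1 hli2 a b hab
  -- any (n-1)-subset of the u's spans the whole space
  have hspan : ∀ s : Finset (Fin (n + 1)), s.card = n - 1 →
      Submodule.span ℝ (u '' ↑s) = ⊤ := by
    intro s hcard
    have hli := hgen s hcard
    have hcardeq : Fintype.card s = Module.finrank ℝ (EuclideanSpace ℝ (Fin (n - 1))) := by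
      simp [Fintype.card_coe, hcard, finrank_euclideanSpace, Fintype.card_fin]
    have h2 := hli.span_eq_top_of_card_eq_finrank' hcardeq
    have himg : u '' ↑s = Set.range (fun i : s => u i.1) := by
      ext x
      constructor
      · rintro ⟨i, hi, rfl⟩; exact ⟨⟨i, hi⟩, rfl⟩
      · rintro ⟨⟨i, hi⟩, rfl⟩; exact ⟨i, hi, rfl⟩
    rw [himg]
    exact h2
  -- a vector orthogonal to an (n-1)-subset of the u's is zero
  have horto : ∀ s : Finset (Fin (n + 1)), s.card = n - 1 →
      ∀ x : EuclideanSpace ℝ (Fin (n - 1)), (∀ i ∈ s, ⟪u i, x⟫ = 0) → x = 0 := by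
    intro s hcard x hx
    have hall : ∀ y : EuclideanSpace ℝ (Fin (n - 1)), ⟪y, x⟫ = (0 : ℝ) := by
      intro y
      have hy : y ∈ Submodule.span ℝ (u '' ↑s) := by
        rw [hspan s hcard]; trivial
      induction hy using Submodule.span_induction with
      | mem z hz =>
        obtain ⟨i, hi, rfl⟩ := hz
        exact hx i (by simpa using hi)
      | zero => exact inner_zero_left x
      | add y z _ _ ihy ihz => rw [inner_add_left, ihy, ihz, add_zero]
      | smul c y _ ihy => rw [real_inner_smul_left, ihy, mul_zero]
    exact inner_self_eq_zero.mp (hall x)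
  -- the key scalar relation
  have key : ∀ i j : Fin (n + 1), i ≠ j →
      lam i - ⟪u i, w⟫ - 2 * μ j * ⟪u i, u j⟫ = 0 := by
    intro i j hij
    have hb : ∀ b, ⟪(lam i - ⟪u i, w⟫ - 2 * μ j * ⟪u i, u j⟫) • u j
        + (2 * μ i * ⟪u i, u j⟫ + ⟪u j, w⟫ - lam j) • u i, b⟫ = (0 : ℝ) := by
      intro b
      have h1 := hrel i (u j) b
      have h2 := hrel j (u i) b
      have hs := hT1 (u i) (u j) b
      rw [h1, h2, hv i, hv j] at hs
      simp only [inner_add_left, inner_add_right, real_inner_smul_left,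
        real_inner_smul_right] at hs ⊢
      simp only [real_inner_comm b, real_inner_comm (u j) (u i)] at hs ⊢
      linear_combination hs
    have hz : (lam i - ⟪u i, w⟫ - 2 * μ j * ⟪u i, u j⟫) • u j
        + (2 * μ i * ⟪u i, u j⟫ + ⟪u j, w⟫ - lam j) • u i = 0 :=
      inner_self_eq_zero.mp (hb _)
    exact (hpair j i hij.symm _ _ hz).1
  -- all μ vanish
  have hmu : ∀ j, μ j = 0 := by
    intro j
    obtain ⟨k, hk⟩ : ∃ k : Fin (n + 1), k ≠ j := by
      by_cases h : j = ⟨0, by omega⟩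
      · exact ⟨⟨1, by omega⟩, by rw [h]; exact Fin.ne_of_val_ne one_ne_zero⟩
      · exact ⟨⟨0, by omega⟩, fun hc => h hc.symm⟩
    set s : Finset (Fin (n + 1)) := Finset.univ \ {j, k} with hs
    have hcard2 : ({j, k} : Finset (Fin (n + 1))).card = 2 := by
      rw [Finset.card_insert_of_notMem (by simpa using hk.symm), Finset.card_singleton]
    have hcard : s.card = n - 1 := by
      rw [hs, Finset.card_sdiff_of_subset (Finset.subset_univ _), hcard2, Finset.card_univ,
        Fintype.card_fin]
      omega
    have hx : μ j • u j - μ k • u k = 0 := by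
      apply horto s hcard
      intro i hi
      have hij : i ≠ j := by
        intro h; rw [hs] at hi; simp [h] at hi
      have hik : i ≠ k := by
        intro h; rw [hs] at hi; simp [h] at hi
      have h1 := key i j hij
      have h2 := key i k hik
      simp only [inner_sub_right, real_inner_smul_right]
      linarith
    have hx' : μ j • u j + (-μ k) • u k = 0 := by
      rw [neg_smul, ← sub_eq_add_neg]; exact hx
    exact (hpair j k hk.symm _ _ hx').1
  -- all lam i = ⟪u i, w⟫
  have hlam : ∀ i, lam i = ⟪u i, w⟫ := by
    intro i
    obtain ⟨j, hj⟩ : ∃ j : Fin (n + 1), j ≠ i := by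
      by_cases h : i = ⟨0, by omega⟩
      · exact ⟨⟨1, by omega⟩, by rw [h]; exact Fin.ne_of_val_ne one_ne_zero⟩
      · exact ⟨⟨0, by omega⟩, fun hc => h hc.symm⟩
    have := key i j (Ne.symm hj)
    rw [hmu j] at this
    linarith
  -- conclude with η = w
  refine ⟨w, fun a b c => ?_⟩
  obtain ⟨s, -, hcard⟩ :=
    Finset.exists_subset_card_eq (s := (Finset.univ : Finset (Fin (n + 1)))) (n := n - 1)
      (by simp only [Finset.card_univ, Fintype.card_fin]; omega)
  have ha : a ∈ Submodule.span ℝ (u '' ↑s) := by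
    rw [hspan s hcard]; trivial
  induction ha using Submodule.span_induction with
  | mem z hz =>
    obtain ⟨i, -, rfl⟩ := hz
    rw [hrel i b c, hv i, hmu i, hlam i, zero_smul, zero_add]
    simp only [real_inner_comm b (u i)]
    ring
  | zero => simp
  | add x y _ _ ihx ihy =>
    simp only [map_add, LinearMap.add_apply, inner_add_left, inner_add_right] at *
    linear_combination ihx + ihy
  | smul r x _ ihx =>
    simp only [map_smul, LinearMap.smul_apply, real_inner_smul_left, real_inner_smul_right,
      smul_eq_mul] at *
    linear_combination r * ihx
end

section
/- Let d ≥ 1, let ξ ∈ ℝ, and let w₁, …, w_{d+2} be vectors in ℝ^d such that ⟨w_i, w_j⟩ = ξ for all i ≠ j. Then at least two of the vectors are equal: there exist indices i ≠ j with w_i = w_j. -/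
open scoped RealInnerProductSpace

/-- among any `d + 2` vectors in `ℝᵈ` whose pairwise inner
products are all equal to the same constant `ξ`, at least two are equal. -/
theorem equal_pairwise_inner_products_force_equal_vectors
    (d : ℕ) (hd : 1 ≤ d) (ξ : ℝ)
    (w : Fin (d + 2) → EuclideanSpace ℝ (Fin d))
    (hw : ∀ i j, i ≠ j → ⟪w i, w j⟫ = ξ) :
    ∃ i j, i ≠ j ∧ w i = w j := by
  classical
  by_contra hcon
  push_neg at hcon
  have winj : Function.Injective w := by
    intro i j hij
    by_contra hne
    exact hcon i j hne hij
  set t : Finset (EuclideanSpace ℝ (Fin d)) := Finset.image w Finset.univ with ht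
  have hcard : Module.finrank ℝ (EuclideanSpace ℝ (Fin d)) + 1 < t.card := by
    rw [ht, Finset.card_image_of_injective _ winj, Finset.card_univ, Fintype.card_fin,
      finrank_euclideanSpace_fin]
    omega
  obtain ⟨f, hsum, hsum0, x, hx, hfx⟩ :=
    Module.exists_nontrivial_relation_sum_zero_of_finrank_succ_lt_card hcard
  -- rewrite sums over t as sums over Fin (d+2)
  set c : Fin (d + 2) → ℝ := fun i => f (w i) with hc
  have hsum' : ∑ i, c i • w i = 0 := by
    rw [ht, Finset.sum_image (fun a _ b _ h => winj h)] at hsum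
    exact hsum
  have hsum0' : ∑ i, c i = 0 := by
    rw [ht, Finset.sum_image (fun a _ b _ h => winj h)] at hsum0
    exact hsum0
  obtain ⟨j, rfl⟩ : ∃ j, w j = x := by
    rw [ht] at hx; simpa using Finset.mem_image.mp hx
  have hcj : c j ≠ 0 := hfx
  -- key: for each k with c k ≠ 0, ⟪w k, w k⟫ = ξ
  have key : ∀ k : Fin (d + 2), c k ≠ 0 → ⟪w k, w k⟫ = ξ := by
    intro k hck
    have h0 : ⟪∑ i, c i • w i, w k⟫ = (0 : ℝ) := by rw [hsum']; simp
    rw [sum_inner] at h0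
    have : ∑ i, ⟪c i • w i, w k⟫
        = c k * ⟪w k, w k⟫ + ∑ i ∈ Finset.univ.erase k, c i * ξ := by
      rw [← Finset.add_sum_erase _ _ (Finset.mem_univ k), real_inner_smul_left]
      congr 1
      refine Finset.sum_congr rfl fun i hi => ?_
      rw [real_inner_smul_left, hw i k (Finset.ne_of_mem_erase hi)]
    rw [this] at h0
    have herase : ∑ i ∈ Finset.univ.erase k, c i = -c k := by
      have := Finset.add_sum_erase _ c (Finset.mem_univ k)
      rw [hsum0'] at this
      linarith
    rw [← Finset.sum_mul, herase] at h0
    have : c k * (⟪w k, w k⟫ - ξ) = 0 := by linarith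
    have := mul_eq_zero.mp this
    rcases this with h | h
    · exact absurd h hck
    · linarith
  -- find another index with nonzero coefficient
  have : ∃ k, k ≠ j ∧ c k ≠ 0 := by
    by_contra h
    push_neg at h
    have : ∑ i, c i = c j := by
      rw [← Finset.add_sum_erase _ _ (Finset.mem_univ j)]
      have : ∑ i ∈ Finset.univ.erase j, c i = 0 :=
        Finset.sum_eq_zero fun i hi => h i (Finset.ne_of_mem_erase hi)
      rw [this]; ring
    rw [hsum0'] at this
    exact hcj this.symm
  obtain ⟨k, hkj, hck⟩ := this
  have h1 : ⟪w j, w j⟫ = ξ := key j hcj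
  have h2 : ⟪w k, w k⟫ = ξ := key k hck
  have h3 : ⟪w j, w k⟫ = ξ := hw j k (Ne.symm hkj)
  have : ‖w j - w k‖ ^ 2 = 0 := by
    rw [← real_inner_self_eq_norm_sq, inner_sub_sub_self]
    rw [h1, h2, h3, hw k j hkj]
    ring
  have : w j = w k := by
    have := pow_eq_zero_iff (n := 2) (by norm_num) |>.mp this
    rwa [norm_sub_eq_zero_iff] at this
  exact hkj (winj this.symm)
end

section
/- Let n ≥ 4, let L ≥ n, and let u₁, …, u_L ∈ ℝ^{n−1} be vectors in general linear position (any n−1 of them are linearly independent). Let T be a symmetric trilinear form on ℝ^{n−1}, and suppose there exist scalars λ_i ∈ ℝ and vectors v_i ∈ ℝ^{n−1} such that T(u_i, a, b) = λ_i⟨a,b⟩ + ⟨a,u_i⟩⟨b,v_i⟩ + ⟨a,v_i⟩⟨b,u_i⟩ for all a, b ∈ ℝ^{n−1} and all i = 1, …, L. If there exist n − 1 indices whose corresponding vectors are pairwise orthogonal (i.e., the orthogonality graph contains an independent set of size n − 1), then there exist a fixed vector w ∈ ℝ^{n−1} and scalars μ₁, …, μ_L such that v_i = μ_i·u_i + w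 for every i. -/
open scoped RealInnerProductSpace

/-- let `n ≥ 4`, `L ≥ n`, and let `u₁, …, u_L ∈ ℝ^{n-1}` be in
general linear position (any `n-1` of them linearly independent).  If a
symmetric trilinear form `T` satisfies the flat-shadow relations
`T(uᵢ,a,b) = λᵢ⟨a,b⟩ + ⟨a,uᵢ⟩⟨b,vᵢ⟩ + ⟨a,vᵢ⟩⟨b,uᵢ⟩` and there are `n - 1`
indices whose vectors are pairwise orthogonal (an independent set of size
`n - 1` in the orthogonality graph), then `vᵢ = μᵢ·uᵢ + w` for a fixed vector
`w` and scalars `μᵢ`. -/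
theorem independent_set_aligns_flat_shadow_relations
    (n L : ℕ) (hn : 4 ≤ n) (hL : n ≤ L)
    (u : Fin L → EuclideanSpace ℝ (Fin (n - 1)))
    (hgen : ∀ s : Finset (Fin L), s.card = n - 1 →
      LinearIndependent ℝ (fun i : s => u i.1))
    (T : EuclideanSpace ℝ (Fin (n - 1)) →ₗ[ℝ] EuclideanSpace ℝ (Fin (n - 1)) →ₗ[ℝ]
      EuclideanSpace ℝ (Fin (n - 1)) →ₗ[ℝ] ℝ)
    (hT1 : ∀ a b c, T a b c = T b a c) (hT2 : ∀ a b c, T a b c = T a c b)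
    (lam : Fin L → ℝ) (v : Fin L → EuclideanSpace ℝ (Fin (n - 1)))
    (hrel : ∀ i a b, T (u i) a b =
      lam i * ⟪a, b⟫ + ⟪a, u i⟫ * ⟪b, v i⟫ + ⟪a, v i⟫ * ⟪b, u i⟫)
    (hind : ∃ s : Finset (Fin L), s.card = n - 1 ∧
      ∀ i ∈ s, ∀ j ∈ s, i ≠ j → ⟪u i, u j⟫ = 0) :
    ∃ (w : EuclideanSpace ℝ (Fin (n - 1))) (μ : Fin L → ℝ),
      ∀ i, v i = μ i • u i + w := by
  classical
  obtain ⟨S, hScard, hSorth⟩ := hind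
  have hd3 : 3 ≤ n - 1 := by omega
  have hdL : n - 1 ≤ L := by omega
  -- coefficient extraction from general position
  have hcoef : ∀ t : Finset (Fin L), t.card ≤ n - 1 → ∀ c : Fin L → ℝ,
      ∑ i ∈ t, c i • u i = 0 → ∀ i ∈ t, c i = 0 := by
    intro t ht c hsum i hi
    obtain ⟨s, hts, hscard⟩ := Finset.exists_superset_card_eq ht (by simpa using hdL)
    have hli := hgen s hscard
    rw [Fintype.linearIndependent_iff] at hli
    have key := hli (fun j : s => if j.1 ∈ t then c j.1 else 0) ?_ ⟨i, hts hi⟩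
    · simpa [hi] using key
    · have : (∑ j : s, (if j.1 ∈ t then c j.1 else 0) • u j.1)
          = ∑ j ∈ s, (if j ∈ t then c j else 0) • u j :=
        Finset.sum_coe_sort s (fun j => (if j ∈ t then c j else 0) • u j)
      rw [this]
      have h2 : (∑ j ∈ s, (if j ∈ t then c j else 0) • u j)
          = ∑ j ∈ s, (if j ∈ t then c j • u j else 0) := by
        refine Finset.sum_congr rfl fun j _ => ?_
        split <;> simp
      rw [h2, Finset.sum_ite_mem, Finset.inter_eq_right.mpr hts, hsum]
  have hune0 : ∀ i, u i ≠ 0 := by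
    intro i hi0
    have h1 := hcoef {i} (by simp; omega) (fun _ => 1)
      (by simp [hi0]) i (Finset.mem_singleton_self i)
    exact one_ne_zero h1
  have huu : ∀ i, ⟪u i, u i⟫ ≠ 0 := fun i h =>
    hune0 i ((inner_self_eq_zero (𝕜 := ℝ)).mp h)
  -- the pair relation
  have pairEq : ∀ i j, lam i • u j + ⟪u i, u j⟫ • v i + ⟪u j, v i⟫ • u i
      = lam j • u i + ⟪u i, u j⟫ • v j + ⟪u i, v j⟫ • u j := by
    intro i j
    apply ext_inner_left ℝ
    intro b
    have h3 := hT1 (u i) (u j) b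
    rw [hrel i (u j) b, hrel j (u i) b] at h3
    simp only [inner_add_right, real_inner_smul_right]
    rw [real_inner_comm b (u j), real_inner_comm b (u i),
      real_inner_comm (u j) (u i)] at *
    linarith [h3]
  -- orthogonal pair ⇒ lam i = ⟪u i, v j⟫
  have horth : ∀ i j : Fin L, i ≠ j → ⟪u i, u j⟫ = 0 → ⟪u i, v j⟫ = lam i := by
    intro i j hij h0
    have h := pairEq i j
    rw [h0] at h
    have h0' : ⟪u j, u i⟫ = 0 := by rwa [real_inner_comm]
    have hsum : ∑ x ∈ ({i, j} : Finset (Fin L)),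
        (fun x => if x = i then ⟪u j, v i⟫ - lam j else lam i - ⟪u i, v j⟫) x • u x = 0 := by
      rw [Finset.sum_pair hij]
      simp only [eq_self_iff_true, if_true, Ne.symm hij, if_false]
      linear_combination (norm := module) h
    have := hcoef {i, j} (by
      rw [Finset.card_insert_of_notMem (by simp [hij]), Finset.card_singleton]; omega)
      _ hsum j (by simp)
    simp only [Ne.symm hij, if_false] at this
    linarith
  -- the orthogonal family is a basis
  have hSind := hgen S hScard
  have hScardF : Fintype.card S = Module.finrank ℝ (EuclideanSpace ℝ (Fin (n - 1))) := by
    rw [finrank_euclideanSpace, Fintype.card_coe, hScard, Fintype.card_fin]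
  have hSne : Nonempty S := by
    have hpos : 0 < S.card := by rw [hScard]; omega
    exact (Finset.card_pos.mp hpos).to_subtype
  let B := basisOfLinearIndependentOfCardEqFinrank hSind hScardF
  have hzero : ∀ y : EuclideanSpace ℝ (Fin (n - 1)),
      (∀ j ∈ S, ⟪u j, y⟫ = 0) → y = 0 := by
    intro y hy
    have hspan : ∀ z : EuclideanSpace ℝ (Fin (n - 1)), ⟪z, y⟫ = 0 := by
      intro z
      have hz : z ∈ Submodule.span ℝ (Set.range fun i : S => u i.1) := by
        have hB := B.span_eq
        rw [coe_basisOfLinearIndependentOfCardEqFinrank] at hB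
        rw [hB]; trivial
      induction hz using Submodule.span_induction with
      | mem x hx => obtain ⟨i, rfl⟩ := hx; exact hy i.1 i.2
      | zero => simp
      | add a b _ _ ha hb => rw [inner_add_left, ha, hb]; ring
      | smul r a _ ha => rw [real_inner_smul_left, ha]; ring
    have := hspan y
    rwa [inner_self_eq_zero] at this
  -- the common vector w
  set w : EuclideanSpace ℝ (Fin (n - 1)) :=
    ∑ j ∈ S, (lam j / ⟪u j, u j⟫) • u j with hw_def
  have hwinner : ∀ j ∈ S, ⟪u j, w⟫ = lam j := by
    intro j hj
    rw [hw_def, inner_sum, Finset.sum_eq_single j]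
    · rw [real_inner_smul_right]
      exact div_mul_cancel₀ (lam j) (huu j)
    · intro i hi hij
      rw [real_inner_smul_right, hSorth j hj i hi (Ne.symm hij), mul_zero]
    · intro h; exact absurd hj h
  -- step 4 : indices in S
  have hS4 : ∀ j ∈ S, ∃ m : ℝ, v j = m • u j + w := by
    intro k hk
    refine ⟨⟪u k, v k - w⟫ / ⟪u k, u k⟫, ?_⟩
    have hy : v k - w - (⟪u k, v k - w⟫ / ⟪u k, u k⟫) • u k = 0 := by
      apply hzero
      intro j hj
      by_cases hjk : j = k
      · subst hjk
        rw [inner_sub_right, real_inner_smul_right,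
          div_mul_cancel₀ _ (huu j), sub_self]
      · have h0 : ⟪u j, u k⟫ = 0 := hSorth j hj k hk hjk
        have h1 : ⟪u j, v k⟫ = lam j := horth j k hjk h0
        rw [inner_sub_right, inner_sub_right, real_inner_smul_right, h0, h1,
          hwinner j hj]
        ring
    have h2 : v k - w = (⟪u k, v k - w⟫ / ⟪u k, u k⟫) • u k := by
      linear_combination (norm := module) hy
    rw [← h2]; abel
  -- decomposition across a non-orthogonal pair
  have hdecomp : ∀ k, k ∉ S → ∀ j ∈ S, ⟪u k, u j⟫ ≠ 0 →
      ∃ a b : ℝ, v k - w = a • u k + b • u j := by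
    intro k hk j hj hcne
    obtain ⟨m, hm⟩ := hS4 j hj
    have h := pairEq k j
    rw [hm] at h
    set c := ⟪u k, u j⟫ with hc_def
    refine ⟨c⁻¹ * (lam j - ⟪u j, v k⟫),
      c⁻¹ * (c * m + ⟪u k, m • u j + w⟫ - lam k), ?_⟩
    have goal' : c • (v k - w) = (lam j - ⟪u j, v k⟫) • u k
        + (c * m + ⟪u k, m • u j + w⟫ - lam k) • u j := by
      linear_combination (norm := module) h
    rw [← smul_smul, ← smul_smul, ← smul_add, ← goal', smul_smul,
      inv_mul_cancel₀ hcne, one_smul]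
  -- every index aligns
  have hmain : ∀ i, ∃ m : ℝ, v i = m • u i + w := by
    intro k
    by_cases hk : k ∈ S
    · exact hS4 k hk
    · -- find two indices in S not orthogonal to u k
      have htwo : ∃ j₁ ∈ S, ∃ j₂ ∈ S, j₁ ≠ j₂ ∧ ⟪u k, u j₁⟫ ≠ 0 ∧ ⟪u k, u j₂⟫ ≠ 0 := by
        by_contra hno
        push_neg at hno
        by_cases hex : ∃ j ∈ S, ⟪u k, u j⟫ ≠ 0
        · obtain ⟨j₀, hj₀, hj₀ne⟩ := hex
          have hall : ∀ j ∈ S, j ≠ j₀ → ⟪u k, u j⟫ = 0 := by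
            intro j hj hne
            by_contra hco
            exact hco (hno j₀ hj₀ j hj (Ne.symm hne) hj₀ne)
          have hyy : u k - (⟪u j₀, u k⟫ / ⟪u j₀, u j₀⟫) • u j₀ = 0 := by
            apply hzero
            intro j hj
            by_cases hjj : j = j₀
            · subst hjj
              rw [inner_sub_right, real_inner_smul_right,
                div_mul_cancel₀ _ (huu j), sub_self]
            · rw [inner_sub_right, real_inner_smul_right,
                hSorth j hj j₀ hj₀ hjj, real_inner_comm, hall j hj hjj]
              ring
          have hkj : k ≠ j₀ := fun h => hk (h ▸ hj₀)
          have hsum : ∑ x ∈ ({k, j₀} : Finset (Fin L)),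
              (fun x => if x = k then (1 : ℝ)
                else -(⟪u j₀, u k⟫ / ⟪u j₀, u j₀⟫)) x • u x = 0 := by
            rw [Finset.sum_pair hkj]
            simp only [eq_self_iff_true, if_true, Ne.symm hkj, if_false]
            linear_combination (norm := module) hyy
          have h1 := hcoef {k, j₀} (by
            rw [Finset.card_insert_of_notMem (by simp [hkj]),
              Finset.card_singleton]; omega) _ hsum k (by simp)
          simp only [eq_self_iff_true, if_true] at h1
          exact one_ne_zero h1
        · push_neg at hex
          have : u k = 0 := by
            apply hzero
            intro j hj
            rw [real_inner_comm]
            exact hex j hj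
          exact hune0 k this
      obtain ⟨j₁, hj₁, j₂, hj₂, hj12, hne1, hne2⟩ := htwo
      obtain ⟨a₁, b₁, hab₁⟩ := hdecomp k hk j₁ hj₁ hne1
      obtain ⟨a₂, b₂, hab₂⟩ := hdecomp k hk j₂ hj₂ hne2
      have hkj₁ : k ≠ j₁ := fun h => hk (h ▸ hj₁)
      have hkj₂ : k ≠ j₂ := fun h => hk (h ▸ hj₂)
      have hsum : ∑ x ∈ ({k, j₁, j₂} : Finset (Fin L)),
          (fun x => if x = k then a₁ - a₂ else if x = j₁ then b₁ else -b₂) x • u x = 0 := by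
        rw [Finset.sum_insert (by simp [hkj₁, hkj₂]), Finset.sum_pair hj12]
        simp only [eq_self_iff_true, if_true, Ne.symm hkj₁, Ne.symm hkj₂,
          Ne.symm hj12, if_false]
        have h := hab₁.symm.trans hab₂
        linear_combination (norm := module) h
      have hcard3 : ({k, j₁, j₂} : Finset (Fin L)).card ≤ n - 1 := by
        rw [Finset.card_insert_of_notMem (by simp [hkj₁, hkj₂]),
          Finset.card_insert_of_notMem (by simp [hj12]), Finset.card_singleton]
        omega
      have hb₁ := hcoef {k, j₁, j₂} hcard3 _ hsum j₁ (by simp)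
      simp only [eq_self_iff_true, if_true, Ne.symm hkj₁, if_false] at hb₁
      refine ⟨a₁, ?_⟩
      rw [hb₁, zero_smul, add_zero] at hab₁
      linear_combination (norm := module) hab₁
  exact ⟨w, fun i => (hmain i).choose, fun i => (hmain i).choose_spec⟩
end

section
/- Let n ≥ 3, let e be a unit vector in ℝ^{n−1}, and let T₃, T₄, T₅ be symmetric trilinear, 4-linear and 5-linear forms on ℝ^{n−1}. Suppose there exist pairwise distinct reals r₁, r₂, r₃ > 0 and reals m₁, m₂, m₃ such that for each i ∈ {1,2,3} and all vectors a, b, c, d orthogonal to e the following hold: (i) T₃(e,a,b) = (−m_i + 1/r_i)⟨a,b⟩; (ii) T₄(e,a,b,c) = (−m_i + 2/r_i)·T₃(a,b,c) − m_i·(T₃(e,e,a)⟨b,c⟩ + T₃(e,e,b)⟨c,a⟩ + T₃(e,e,c)⟨a,b⟩); (iii) T₅(e,a,b,c,d) = (−m_i + 3/r_i)·T₄(a,b,c,d) − m_i·(T₄(e,e,a,b)⟨c,d⟩ + T₄(e,e,a,c)⟨b,d⟩ + T₄(e,e,a,d)⟨b,c⟩ + T₄(e,e,b,c)⟨a,d⟩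 + T₄(e,e,b,d)⟨a,c⟩ + T₄(e,e,c,d)⟨a,b⟩) − m_i·(T₃(a,b,c)T₃(e,e,d) + T₃(a,b,d)T₃(e,e,c) + T₃(a,c,d)T₃(e,e,b) + T₃(b,c,d)T₃(e,e,a)) − ((−m_i + 1/r_i)(−4m_i + 1/r_i)(1/r_i) + T₃(e,e,e)·(m_i² − m_i/r_i + 1/r_i²))·(⟨a,b⟩⟨c,d⟩ + ⟨a,c⟩⟨b,d⟩ + ⟨a,d⟩⟨b,c⟩). Then there exists η ∈ ℝ^{n−1} such that T₃(x,x,x) = ⟨x,x⟩⟨x,η⟩ for all x ∈ ℝ^{n−1}. -/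
open scoped RealInnerProductSpace

/-- constraints coming from three collinear light sources
`r₁e, r₂e, r₃e` (with `r₁, r₂, r₃ > 0` pairwise distinct) creating flat shadow
boundaries: if symmetric multilinear forms `T₃, T₄, T₅` (the third, fourth and
fifth derivatives of the canonical parametrization) satisfy the relations
(i)–(iii) on the orthogonal complement of the unit vector `e`, then the cubic
form `T₃` has the divisor `⟨x,x⟩`, i.e. `T₃(x,x,x) = ⟨x,x⟩⟨x,η⟩` for some
vector `η`. -/
theorem collinear_light_sources_force_trivial_cubic
    (n : ℕ) (hn : 3 ≤ n)
    (e : EuclideanSpace ℝ (Fin (n - 1))) (he : ‖e‖ = 1)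
    (T₃ : MultilinearMap ℝ (fun _ : Fin 3 => EuclideanSpace ℝ (Fin (n - 1))) ℝ)
    (T₄ : MultilinearMap ℝ (fun _ : Fin 4 => EuclideanSpace ℝ (Fin (n - 1))) ℝ)
    (T₅ : MultilinearMap ℝ (fun _ : Fin 5 => EuclideanSpace ℝ (Fin (n - 1))) ℝ)
    (hT₃ : ∀ (σ : Equiv.Perm (Fin 3)) (x : Fin 3 → EuclideanSpace ℝ (Fin (n - 1))),
      T₃ (x ∘ σ) = T₃ x)
    (hT₄ : ∀ (σ : Equiv.Perm (Fin 4)) (x : Fin 4 → EuclideanSpace ℝ (Fin (n - 1))),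
      T₄ (x ∘ σ) = T₄ x)
    (hT₅ : ∀ (σ : Equiv.Perm (Fin 5)) (x : Fin 5 → EuclideanSpace ℝ (Fin (n - 1))),
      T₅ (x ∘ σ) = T₅ x)
    (r m : Fin 3 → ℝ) (hr : ∀ i, 0 < r i) (hrne : ∀ i j, i ≠ j → r i ≠ r j)
    (h1 : ∀ i, ∀ a b : EuclideanSpace ℝ (Fin (n - 1)), ⟪a, e⟫ = 0 → ⟪b, e⟫ = 0 →
      T₃ ![e, a, b] = (-(m i) + (r i)⁻¹) * ⟪a, b⟫)
    (h2 : ∀ i, ∀ a b c : EuclideanSpace ℝ (Fin (n - 1)),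
      ⟪a, e⟫ = 0 → ⟪b, e⟫ = 0 → ⟪c, e⟫ = 0 →
      T₄ ![e, a, b, c] = (-(m i) + 2 * (r i)⁻¹) * T₃ ![a, b, c]
        - m i * (T₃ ![e, e, a] * ⟪b, c⟫ + T₃ ![e, e, b] * ⟪c, a⟫
            + T₃ ![e, e, c] * ⟪a, b⟫))
    (h3 : ∀ i, ∀ a b c d : EuclideanSpace ℝ (Fin (n - 1)),
      ⟪a, e⟫ = 0 → ⟪b, e⟫ = 0 → ⟪c, e⟫ = 0 → ⟪d, e⟫ = 0 →
      T₅ ![e, a, b, c, d] = (-(m i) + 3 * (r i)⁻¹) * T₄ ![a, b, c, d]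
        - m i * (T₄ ![e, e, a, b] * ⟪c, d⟫ + T₄ ![e, e, a, c] * ⟪b, d⟫
            + T₄ ![e, e, a, d] * ⟪b, c⟫ + T₄ ![e, e, b, c] * ⟪a, d⟫
            + T₄ ![e, e, b, d] * ⟪a, c⟫ + T₄ ![e, e, c, d] * ⟪a, b⟫)
        - m i * (T₃ ![a, b, c] * T₃ ![e, e, d] + T₃ ![a, b, d] * T₃ ![e, e, c]
            + T₃ ![a, c, d] * T₃ ![e, e, b] + T₃ ![b, c, d] * T₃ ![e, e, a])
        - ((-(m i) + (r i)⁻¹) * (-(4 * m i) + (r i)⁻¹) * (r i)⁻¹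
            + T₃ ![e, e, e] * ((m i) ^ 2 - m i * (r i)⁻¹ + ((r i)⁻¹) ^ 2))
          * (⟪a, b⟫ * ⟪c, d⟫ + ⟪a, c⟫ * ⟪b, d⟫ + ⟪a, d⟫ * ⟪b, c⟫)) :
    ∃ η : EuclideanSpace ℝ (Fin (n - 1)),
      ∀ x : EuclideanSpace ℝ (Fin (n - 1)), T₃ ![x, x, x] = ⟪x, x⟫ * ⟪x, η⟫ := by
  classical
  have huee : ⟪e, e⟫ = (1 : ℝ) := by
    rw [real_inner_self_eq_norm_sq, he]; norm_num
  -- a unit vector orthogonal to e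
  obtain ⟨a₀, ha₀e, ha₀⟩ : ∃ a : EuclideanSpace ℝ (Fin (n - 1)), ⟪a, e⟫ = 0 ∧ ⟪a, a⟫ = 1 := by
    have hdim : 2 ≤ Module.finrank ℝ (EuclideanSpace ℝ (Fin (n - 1))) := by
      simp only [finrank_euclideanSpace, Fintype.card_fin]; omega
    have hne : (ℝ ∙ e)ᗮ ≠ ⊥ := by
      intro h
      have h2' := Submodule.finrank_add_finrank_orthogonal (K := (ℝ ∙ e))
      rw [h] at h2'
      have he0 : e ≠ 0 := by intro h0; rw [h0] at he; simp at he
      simp [finrank_span_singleton he0] at h2'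
      omega
    obtain ⟨x, hx, hx0⟩ := Submodule.exists_mem_ne_zero_of_ne_bot hne
    refine ⟨‖x‖⁻¹ • x, ?_, ?_⟩
    · have hxe : ⟪x, e⟫ = 0 := by
        have := (Submodule.mem_orthogonal _ _).mp hx e (Submodule.mem_span_singleton_self e)
        rw [real_inner_comm] at this; exact this
      rw [real_inner_smul_left, hxe, mul_zero]
    · rw [real_inner_self_eq_norm_sq, norm_smul]
      simp [norm_ne_zero_iff.mpr hx0]
  -- the common constant L
  obtain ⟨L, hL⟩ : ∃ L : ℝ, ∀ i, -(m i) + (r i)⁻¹ = L := by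
    refine ⟨-(m 0) + (r 0)⁻¹, fun i => ?_⟩
    have hi := h1 i a₀ a₀ ha₀e ha₀e
    have h0 := h1 0 a₀ a₀ ha₀e ha₀e
    rw [ha₀] at hi h0
    linarith
  have hm : ∀ i, m i = (r i)⁻¹ - L := fun i => by linarith [hL i]
  have hinv : ∀ i j : Fin 3, i ≠ j → (r i)⁻¹ - (r j)⁻¹ ≠ 0 := fun i j hij h => by
    exact hrne i j hij (inv_injective (by linarith))
  -- Step A : T₃ on the orthogonal complement
  have stepA : ∀ a b c : EuclideanSpace ℝ (Fin (n - 1)),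
      ⟪a, e⟫ = 0 → ⟪b, e⟫ = 0 → ⟪c, e⟫ = 0 →
      T₃ ![a, b, c] = T₃ ![e, e, a] * ⟪b, c⟫ + T₃ ![e, e, b] * ⟪c, a⟫
        + T₃ ![e, e, c] * ⟪a, b⟫ := by
    intro a b c ha hb hc
    have e0 := h2 0 a b c ha hb hc
    have e1 := h2 1 a b c ha hb hc
    rw [hm 0] at e0
    rw [hm 1] at e1
    have key : ((r 0)⁻¹ - (r 1)⁻¹) * (T₃ ![a, b, c] -
        (T₃ ![e, e, a] * ⟪b, c⟫ + T₃ ![e, e, b] * ⟪c, a⟫ + T₃ ![e, e, c] * ⟪a, b⟫)) = 0 := by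
      linear_combination e1 - e0
    have := (mul_eq_zero.mp key).resolve_left (hinv 0 1 (by decide))
    linarith [this]
  -- Step B : T₃(e,e,e) = 3 L
  have hc3 : T₃ ![e, e, e] = 3 * L := by
    have e0 := h3 0 a₀ a₀ a₀ a₀ ha₀e ha₀e ha₀e ha₀e
    have e1 := h3 1 a₀ a₀ a₀ a₀ ha₀e ha₀e ha₀e ha₀e
    have e2 := h3 2 a₀ a₀ a₀ a₀ ha₀e ha₀e ha₀e ha₀e
    rw [hm 0, ha₀] at e0
    rw [hm 1, ha₀] at e1
    rw [hm 2, ha₀] at e2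
    have key01 : ((r 0)⁻¹ - (r 1)⁻¹) * (2 * T₄ ![a₀, a₀, a₀, a₀]
        - (6 * T₄ ![e, e, a₀, a₀] + 4 * T₃ ![a₀, a₀, a₀] * T₃ ![e, e, a₀])
        - 3 * (4 * L ^ 2 - T₃ ![e, e, e] * L
            + (T₃ ![e, e, e] - 3 * L) * ((r 0)⁻¹ + (r 1)⁻¹))) = 0 := by
      linear_combination e1 - e0
    have key02 : ((r 0)⁻¹ - (r 2)⁻¹) * (2 * T₄ ![a₀, a₀, a₀, a₀]
        - (6 * T₄ ![e, e, a₀, a₀] + 4 * T₃ ![a₀, a₀, a₀] * T₃ ![e, e, a₀])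
        - 3 * (4 * L ^ 2 - T₃ ![e, e, e] * L
            + (T₃ ![e, e, e] - 3 * L) * ((r 0)⁻¹ + (r 2)⁻¹))) = 0 := by
      linear_combination e2 - e0
    have w01 := (mul_eq_zero.mp key01).resolve_left (hinv 0 1 (by decide))
    have w02 := (mul_eq_zero.mp key02).resolve_left (hinv 0 2 (by decide))
    have key12 : ((r 1)⁻¹ - (r 2)⁻¹) * (3 * (T₃ ![e, e, e] - 3 * L)) = 0 := by
      linear_combination w02 - w01
    have := (mul_eq_zero.mp key12).resolve_left (hinv 1 2 (by decide))
    linarith [this]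
  -- update lemmas
  have upd0 : ∀ w u v z : EuclideanSpace ℝ (Fin (n - 1)),
      Function.update ![w, u, v] 0 z = ![z, u, v] := by
    intro w u v z; funext i; fin_cases i <;> simp
  have upd1 : ∀ w u v z : EuclideanSpace ℝ (Fin (n - 1)),
      Function.update ![w, u, v] 1 z = ![w, z, v] := by
    intro w u v z; funext i; fin_cases i <;> simp
  have upd2 : ∀ w u v z : EuclideanSpace ℝ (Fin (n - 1)),
      Function.update ![w, u, v] 2 z = ![w, u, z] := by
    intro w u v z; funext i; fin_cases i <;> simp
  -- multilinearity expansion lemmas for T₃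
  have add0 : ∀ p q u v : EuclideanSpace ℝ (Fin (n - 1)),
      T₃ ![p + q, u, v] = T₃ ![p, u, v] + T₃ ![q, u, v] := by
    intro p q u v
    have h := T₃.map_update_add ![p, u, v] 0 p q
    rwa [upd0, upd0, upd0] at h
  have add1 : ∀ p q u v : EuclideanSpace ℝ (Fin (n - 1)),
      T₃ ![u, p + q, v] = T₃ ![u, p, v] + T₃ ![u, q, v] := by
    intro p q u v
    have h := T₃.map_update_add ![u, p, v] 1 p q
    rwa [upd1, upd1, upd1] at h
  have add2 : ∀ p q u v : EuclideanSpace ℝ (Fin (n - 1)),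
      T₃ ![u, v, p + q] = T₃ ![u, v, p] + T₃ ![u, v, q] := by
    intro p q u v
    have h := T₃.map_update_add ![u, v, p] 2 p q
    rwa [upd2, upd2, upd2] at h
  have smul0 : ∀ (c : ℝ) (p u v : EuclideanSpace ℝ (Fin (n - 1))),
      T₃ ![c • p, u, v] = c * T₃ ![p, u, v] := by
    intro c p u v
    have h := T₃.map_update_smul ![p, u, v] 0 c p
    rwa [upd0, upd0] at h
  have smul1 : ∀ (c : ℝ) (p u v : EuclideanSpace ℝ (Fin (n - 1))),
      T₃ ![u, c • p, v] = c * T₃ ![u, p, v] := by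
    intro c p u v
    have h := T₃.map_update_smul ![u, p, v] 1 c p
    rwa [upd1, upd1] at h
  have smul2 : ∀ (c : ℝ) (p u v : EuclideanSpace ℝ (Fin (n - 1))),
      T₃ ![u, v, c • p] = c * T₃ ![u, v, p] := by
    intro c p u v
    have h := T₃.map_update_smul ![u, v, p] 2 c p
    rwa [upd2, upd2] at h
  -- symmetry lemmas
  have p1 : ∀ u v : EuclideanSpace ℝ (Fin (n - 1)), T₃ ![u, v, u] = T₃ ![u, u, v] := by
    intro u v
    have h := hT₃ (Equiv.swap 1 2) ![u, u, v]
    have hc : ![u, u, v] ∘ (Equiv.swap 1 2) = ![u, v, u] := by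
      funext i; fin_cases i <;> rfl
    rwa [hc] at h
  have p2 : ∀ u v : EuclideanSpace ℝ (Fin (n - 1)), T₃ ![v, u, u] = T₃ ![u, u, v] := by
    intro u v
    have h := hT₃ (Equiv.swap 0 2) ![u, u, v]
    have hc : ![u, u, v] ∘ (Equiv.swap 0 2) = ![v, u, u] := by
      funext i; fin_cases i <;> rfl
    rwa [hc] at h
  -- Riesz representation of a ↦ T₃(e,e,a)
  obtain ⟨v, hv⟩ : ∃ v : EuclideanSpace ℝ (Fin (n - 1)),
      ∀ a : EuclideanSpace ℝ (Fin (n - 1)), T₃ ![e, e, a] = ⟪a, v⟫ := by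
    let g : EuclideanSpace ℝ (Fin (n - 1)) →ₗ[ℝ] ℝ :=
      { toFun := fun a => T₃ ![e, e, a]
        map_add' := by
          intro a b
          show T₃ ![e, e, a + b] = T₃ ![e, e, a] + T₃ ![e, e, b]
          exact add2 a b e e
        map_smul' := by
          intro c a
          show T₃ ![e, e, c • a] = c * T₃ ![e, e, a]
          exact smul2 c a e e }
    refine ⟨(InnerProductSpace.toDual ℝ _).symm (LinearMap.toContinuousLinearMap g),
      fun a => ?_⟩
    rw [real_inner_comm, InnerProductSpace.toDual_symm_apply]
    rfl
  have hev : ⟪e, v⟫ = 3 * L := by rw [← hv e, hc3]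
  -- the candidate vector
  refine ⟨(3 : ℝ) • v - (6 * L) • e, fun x => ?_⟩
  set t : ℝ := ⟪x, e⟫ with ht
  set a : EuclideanSpace ℝ (Fin (n - 1)) := x - t • e with hadef
  have hae : ⟪a, e⟫ = 0 := by
    rw [hadef, inner_sub_left, real_inner_smul_left, huee, ← ht]
    ring
  have hea : ⟪e, a⟫ = 0 := by rw [real_inner_comm]; exact hae
  have hx : x = t • e + a := by rw [hadef]; module
  -- the needed values of T₃
  have f1 : T₃ ![e, a, a] = L * ⟪a, a⟫ := by rw [h1 0 a a hae hae, hL 0]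
  have f2 : T₃ ![e, e, a] = ⟪a, v⟫ := hv a
  have f3 : T₃ ![a, a, a] = 3 * ⟪a, v⟫ * ⟪a, a⟫ := by
    rw [stepA a a a hae hae hae, f2]; ring
  have q1 : T₃ ![e, a, e] = T₃ ![e, e, a] := p1 e a
  have q2 : T₃ ![a, e, e] = T₃ ![e, e, a] := p2 e a
  have q3 : T₃ ![a, e, a] = T₃ ![e, a, a] := (p1 a e).trans (p2 a e).symm
  have q4 : T₃ ![a, a, e] = T₃ ![e, a, a] := (p2 a e).symm
  -- expand the left-hand side
  have hLHS : T₃ ![x, x, x]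
      = 3 * L * t ^ 3 + 3 * t ^ 2 * ⟪a, v⟫ + 3 * L * t * ⟪a, a⟫ + 3 * ⟪a, v⟫ * ⟪a, a⟫ := by
    conv_lhs => rw [hx]
    simp only [add0, add1, add2, smul0, smul1, smul2]
    rw [q1, q2, q3, q4, hc3, f1, f2, f3]
    ring
  -- expand the right-hand side inner products
  have hxx : ⟪x, x⟫ = t ^ 2 + ⟪a, a⟫ := by
    conv_lhs => rw [hx]
    simp only [inner_add_left, inner_add_right, real_inner_smul_left, real_inner_smul_right,
      huee, hae, hea]
    ring
  have hxη : ⟪x, (3 : ℝ) • v - (6 * L) • e⟫ = 3 * L * t + 3 * ⟪a, v⟫ := by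
    conv_lhs => rw [hx]
    simp only [inner_add_left, inner_sub_right, real_inner_smul_left, real_inner_smul_right,
      huee, hae, hev]
    ring
  rw [hLHS, hxx, hxη]
  ring
end

section
/- Let p > 1, n ≥ 2, fix an index i ∈ {1, …, n} and a real λ ≠ 0. Let x ∈ ℝ^n satisfy Σ_{j=1}^n |x_j|^p = 1, and define N(x) ∈ ℝ^n by N(x)_j = |x_j|^{p−1}·sgn(x_j). Then Σ_{j=1}^n N(x)_j·(x_j − λ·(e_i)_j) = 0 if and only if |x_i|^{p−1}·sgn(x_i) = 1/λ, which in turn holds if and only if x_i = sgn(λ)·|λ|^{1/(1−p)}. Consequently, the set of points of the unit sphere of the ℓ^p-norm at which the (outward) normal N(x) is orthogonal to x − λ·e_i (the shadow boundary of the unit ℓ^p-ball created by the point light source λ·e_i) is contained in the affine hyperplane {y ∈ ℝ^n : y_i = sgn(λ)·|λ|^{1/(1−p)}}. -/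
lemma sb_aux_sum (p : ℝ) (hp : 1 < p) {n : ℕ} (i : Fin n) (lam : ℝ)
    (x : Fin n → ℝ) (hx : ∑ j, |x j| ^ p = 1) :
    (∑ j, (|x j| ^ (p - 1) * Real.sign (x j)) * (x j - lam * (if j = i then 1 else 0)))
      = 1 - (|x i| ^ (p - 1) * Real.sign (x i)) * lam := by
  have key : ∀ t : ℝ, (|t| ^ (p - 1) * Real.sign t) * t = |t| ^ p := by
    intro t
    rcases eq_or_ne t 0 with h | h
    · simp [h, Real.zero_rpow (show p ≠ 0 by linarith)]
    · have hs : Real.sign t * t = |t| := by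
        rcases lt_or_gt_of_ne h with h' | h'
        · rw [Real.sign_of_neg h', abs_of_neg h']; ring
        · rw [Real.sign_of_pos h', abs_of_pos h']; ring
      have habs : |t| ≠ 0 := abs_ne_zero.mpr h
      calc (|t| ^ (p - 1) * Real.sign t) * t = |t| ^ (p - 1) * (Real.sign t * t) := by ring
        _ = |t| ^ (p - 1) * |t| := by rw [hs]
        _ = |t| ^ p := by rw [← Real.rpow_add_one habs]; ring_nf
  have : ∀ j, (|x j| ^ (p - 1) * Real.sign (x j)) * (x j - lam * (if j = i then 1 else 0))
      = |x j| ^ p - (if j = i then (|x i| ^ (p - 1) * Real.sign (x i)) * lam else 0) := by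
    intro j
    rcases eq_or_ne j i with rfl | h
    · simp [mul_sub, key]
    · simp [h, key]
  rw [Finset.sum_congr rfl fun j _ => this j, Finset.sum_sub_distrib, hx,
    Finset.sum_ite_eq' Finset.univ i]
  simp

lemma sb_pos (p lam s : ℝ) (hp : 1 < p) (hl : 0 < lam) (hs : 0 < s) :
    s ^ (p - 1) = lam⁻¹ ↔ s = lam ^ (1 / (1 - p)) := by
  have hp1 : (p - 1) ≠ 0 := by intro h; rw [sub_eq_zero] at h; linarith
  have hR : lam ^ (1 / (1 - p)) = (lam⁻¹) ^ (p - 1)⁻¹ := by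
    rw [Real.inv_rpow hl.le, ← Real.rpow_neg hl.le]
    congr 1
    rw [one_div, show (1:ℝ) - p = -(p - 1) by ring, inv_neg]
  rw [hR]
  constructor
  · intro h; rw [← h, Real.rpow_rpow_inv hs.le hp1]
  · intro h; rw [h, Real.rpow_inv_rpow (inv_nonneg.mpr hl.le) hp1]

lemma sb_aux (p lam t : ℝ) (hp : 1 < p) (hlam : lam ≠ 0) :
    |t| ^ (p - 1) * Real.sign t = 1 / lam ↔ t = Real.sign lam * |lam| ^ (1 / (1 - p)) := by
  have hp1 : (0:ℝ) < p - 1 := by linarith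
  constructor
  · intro h
    have ht : t ≠ 0 := by
      intro h0
      rw [h0] at h
      simp [Real.zero_rpow (ne_of_gt hp1)] at h
      exact hlam h.symm
    rcases lt_or_gt_of_ne ht with htn | htp
    · rw [Real.sign_of_neg htn, abs_of_neg htn] at h
      have hA : (0:ℝ) < (-t) ^ (p - 1) := Real.rpow_pos_of_pos (by linarith) _
      have hln : lam < 0 := by
        have : 1 / lam < 0 := by nlinarith
        exact (one_div_neg.mp this)
      have h2 : (-t) ^ (p - 1) = (-lam)⁻¹ := by
        rw [inv_neg]
        rw [one_div] at h
        linarith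
      have h3 := (sb_pos p (-lam) (-t) hp (by linarith) (by linarith)).mp h2
      rw [Real.sign_of_neg hln, abs_of_neg hln]
      linarith
    · rw [Real.sign_of_pos htp, abs_of_pos htp, mul_one] at h
      have hA : (0:ℝ) < t ^ (p - 1) := Real.rpow_pos_of_pos htp _
      have hlp : 0 < lam := by
        have : 0 < 1 / lam := by linarith
        exact one_div_pos.mp this
      have h2 : t ^ (p - 1) = lam⁻¹ := by rw [h, one_div]
      rw [Real.sign_of_pos hlp, abs_of_pos hlp, one_mul]
      exact (sb_pos p lam t hp hlp htp).mp h2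
  · intro h
    rcases lt_or_gt_of_ne hlam with hln | hlp
    · rw [Real.sign_of_neg hln, abs_of_neg hln] at h
      have hpos : (0:ℝ) < (-lam) ^ (1 / (1 - p)) := Real.rpow_pos_of_pos (by linarith) _
      have htn : t < 0 := by rw [h]; nlinarith
      have h2 : -t = (-lam) ^ (1 / (1 - p)) := by rw [h]; ring
      have h3 := (sb_pos p (-lam) (-t) hp (by linarith) (by linarith)).mpr h2
      rw [Real.sign_of_neg htn, abs_of_neg htn]
      rw [inv_neg] at h3
      rw [one_div]
      linarith
    · rw [Real.sign_of_pos hlp, abs_of_pos hlp, one_mul] at h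
      have htp : 0 < t := by rw [h]; exact Real.rpow_pos_of_pos hlp _
      have h3 := (sb_pos p lam t hp hlp htp).mpr h
      rw [Real.sign_of_pos htp, abs_of_pos htp, mul_one, one_div]
      exact h3

/-- flat shadow boundaries of the unit ball of `ℓᵖ`.  For a
point `x` on the unit sphere of the `ℓᵖ`-norm (`p > 1`) with outward normal
`N(x)ⱼ = |xⱼ|^{p-1}·sgn(xⱼ)`, and a light source `λ·eᵢ` with `λ ≠ 0`:
the normal at `x` is orthogonal to `x - λ·eᵢ` iff `|xᵢ|^{p-1}·sgn(xᵢ) = 1/λ`,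
iff `xᵢ = sgn(λ)·|λ|^{1/(1-p)}`.  Consequently the shadow boundary of the unit
`ℓᵖ`-ball created by the point light source `λ·eᵢ` is contained in the affine
hyperplane `{y : yᵢ = sgn(λ)·|λ|^{1/(1-p)}}`. -/
theorem shadow_boundary_of_lp_ball_is_flat
    (p : ℝ) (hp : 1 < p) (n : ℕ) (hn : 2 ≤ n) (i : Fin n)
    (lam : ℝ) (hlam : lam ≠ 0)
    (x : Fin n → ℝ) (hx : ∑ j, |x j| ^ p = 1) :
    ((∑ j, (|x j| ^ (p - 1) * Real.sign (x j)) * (x j - lam * (if j = i then 1 else 0)) = 0)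
      ↔ |x i| ^ (p - 1) * Real.sign (x i) = 1 / lam) ∧
    ((|x i| ^ (p - 1) * Real.sign (x i) = 1 / lam)
      ↔ x i = Real.sign lam * |lam| ^ (1 / (1 - p))) ∧
    (∀ y : Fin n → ℝ, (∑ j, |y j| ^ p = 1) →
      (∑ j, (|y j| ^ (p - 1) * Real.sign (y j)) * (y j - lam * (if j = i then 1 else 0)) = 0) →
      y i = Real.sign lam * |lam| ^ (1 / (1 - p))) := by
  have h1 : ∀ (y : Fin n → ℝ), (∑ j, |y j| ^ p = 1) →
      ((∑ j, (|y j| ^ (p - 1) * Real.sign (y j)) * (y j - lam * (if j = i then 1 else 0)) = 0)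
        ↔ |y i| ^ (p - 1) * Real.sign (y i) = 1 / lam) := by
    intro y hy
    rw [sb_aux_sum p hp i lam y hy, sub_eq_zero]
    constructor
    · intro h
      field_simp
      linarith
    · intro h
      rw [h]
      field_simp
  refine ⟨h1 x hx, sb_aux p lam (x i) hp hlam, fun y hy hsum => ?_⟩
  exact (sb_aux p lam (y i) hp hlam).mp ((h1 y hy).mp hsum)
end
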